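/- arXiv:1401.0854 — 10 statements merged into one kernel-verified Lean document; each statement's English description precedes it below -/
import Mathlib

section
/- Let F be the multiplicative inverse, in the ring of formal power series ℤ[[x1, x2, x3, x4]], of the polynomial (1 - x1 - x2)(1 - x3 - x4) - x1·x2·x3·x4 (which has constant term 1 and hence is invertible). Then for every natural number n, the coefficient of x1^n·x2^n·x3^n·x4^n in F equals the Apéry number A(n) = Σ_{k=0}^{n} C(n, k)²·C(n+k, k)², where C denotes the usual binomial coefficient. -/
/-!
Write `P = (1 - x₁ - x₂)(1 - x₃ - x₄)` and `Q = x₁x₂x₃x₄`. Expanding `1 / (P - Q)` geometrically gives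
`F = ∑ₘ Qᵐ / P^(m+1)`, and `1 / (1 - x - y)^(m+1) = ∑ C(a+b+m, m) C(a+b, a) xᵃ yᵇ`, so the coefficient of
`(x₁x₂x₃x₄)ⁿ` in `F` is `∑ₘ (C(2n-m, m) C(2(n-m), n-m))²`. Substituting `k = n - m` and using
`C(n+k, 2k) C(2k, k) = C(n+k, k) C(n, k)` turns this into the Apéry sum. To avoid infinite sums the geometric
series is cut off after `m = n`: the remainder is a multiple of `Q^(n+1)` and does not reach that coefficient.
-/

namespace Apery

open MvPowerSeries Finset

section
variable {R : Type*} [CommRing R]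

def pascalDiff (f : ℕ → ℕ → R) (a b : ℕ) : R :=
  f a b - (if a = 0 then 0 else f (a - 1) b) - (if b = 0 then 0 else f a (b - 1))

def prodSeries (f g : ℕ → ℕ → R) : MvPowerSeries (Fin 4) R :=
  fun e => f (e 0) (e 1) * g (e 2) (e 3)

lemma coeff_prodSeries (f g : ℕ → ℕ → R) (e : Fin 4 →₀ ℕ) :
    coeff e (prodSeries f g) = f (e 0) (e 1) * g (e 2) (e 3) := rfl

lemma coeff_X_mul {σ : Type*} (i : σ) (φ : MvPowerSeries σ R) (e : σ →₀ ℕ) :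
    coeff e (X i * φ) = if e i = 0 then 0 else coeff (e - Finsupp.single i 1) φ := by
  classical
  rw [X_def, coeff_monomial_mul, one_mul]
  simp only [Finsupp.single_le_iff, Nat.one_le_iff_ne_zero, ite_not]

lemma one_sub_X0_sub_X1_mul_prodSeries (f g : ℕ → ℕ → R) :
    (1 - X 0 - X 1) * prodSeries f g = prodSeries (pascalDiff f) g := by
  ext e
  simp only [sub_mul, one_mul, map_sub, coeff_X_mul, coeff_prodSeries, pascalDiff]
  split_ifs <;> simp

lemma one_sub_X2_sub_X3_mul_prodSeries (f g : ℕ → ℕ → R) :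
    (1 - X 2 - X 3) * prodSeries f g = prodSeries f (pascalDiff g) := by
  ext e
  simp only [sub_mul, one_mul, map_sub, coeff_X_mul, coeff_prodSeries, pascalDiff]
  split_ifs <;> simp [mul_sub]

lemma prodSeries_indicator_zero :
    prodSeries (R := R) (fun a b => if a = 0 ∧ b = 0 then 1 else 0)
      (fun a b => if a = 0 ∧ b = 0 then 1 else 0) = 1 := by
  classical
  ext e
  simp only [coeff_prodSeries, coeff_one, Finsupp.ext_iff, Fin.forall_fin_succ]
  split_ifs <;> simp_all

noncomputable def diag (n : ℕ) : Fin 4 →₀ ℕ := Finsupp.equivFunOnFinite.symm fun _ => n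

@[simp] lemma diag_apply (n : ℕ) (i : Fin 4) : diag n i = n := rfl

lemma X_mul_X_mul_X_mul_X_pow (m : ℕ) :
    (X 0 * X 1 * X 2 * X 3 : MvPowerSeries (Fin 4) R) ^ m = monomial (diag m) 1 := by
  simp only [X_def, monomial_mul_monomial, monomial_pow, mul_one, one_pow]
  congr
  ext i
  fin_cases i <;> simp

lemma coeff_diag_X_mul_X_mul_X_mul_X_pow_mul (n m : ℕ)
    (φ : MvPowerSeries (Fin 4) R) :
    coeff (diag n) ((X 0 * X 1 * X 2 * X 3) ^ m * φ) =
      if m ≤ n then coeff (diag (n - m)) φ else 0 := by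
  have hle : diag m ≤ diag n ↔ m ≤ n := by simp [Finsupp.le_def]
  have hsub : diag n - diag m = diag (n - m) := by ext; simp
  rw [X_mul_X_mul_X_mul_X_pow, coeff_monomial_mul, one_mul, hsub]
  simp only [hle]

end

/-- The coefficient of `xᵃ yᵇ` in `(1 - x - y)^-(m+1)`. -/
def negPowCoeff (m a b : ℕ) : ℤ := ((a + b + m).choose m : ℤ) * ((a + b).choose a : ℤ)

lemma pascalDiff_negPowCoeff_succ (m : ℕ) : pascalDiff (negPowCoeff (m + 1)) = negPowCoeff m := by
  ext a b
  rcases a with _ | a <;> rcases b with _ | b <;>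
    simp [pascalDiff, negPowCoeff, ← add_assoc, Nat.choose_succ_succ', add_right_comm _ 1]
  ring

lemma pascalDiff_negPowCoeff_zero :
    pascalDiff (negPowCoeff 0) = fun a b => if a = 0 ∧ b = 0 then 1 else 0 := by
  ext a b
  rcases a with _ | a <;> rcases b with _ | b <;>
    simp [pascalDiff, negPowCoeff, ← add_assoc, Nat.choose_succ_succ', add_right_comm _ 1]
  ring

def negPowSeries (m : ℕ) : MvPowerSeries (Fin 4) ℤ := prodSeries (negPowCoeff m) (negPowCoeff m)

lemma mul_negPowSeries_succ (m : ℕ) :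
    (1 - X 0 - X 1) * (1 - X 2 - X 3) * negPowSeries (m + 1) = negPowSeries m := by
  rw [negPowSeries, mul_assoc, one_sub_X2_sub_X3_mul_prodSeries, one_sub_X0_sub_X1_mul_prodSeries,
    pascalDiff_negPowCoeff_succ, negPowSeries]

lemma mul_negPowSeries_zero : (1 - X 0 - X 1) * (1 - X 2 - X 3) * negPowSeries 0 = 1 := by
  rw [negPowSeries, mul_assoc, one_sub_X2_sub_X3_mul_prodSeries, one_sub_X0_sub_X1_mul_prodSeries,
    pascalDiff_negPowCoeff_zero, prodSeries_indicator_zero]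

noncomputable def partialInv (N : ℕ) : MvPowerSeries (Fin 4) ℤ :=
  ∑ m ∈ range (N + 1), (X 0 * X 1 * X 2 * X 3) ^ m * negPowSeries m

lemma mul_partialInv (N : ℕ) :
    ((1 - X 0 - X 1) * (1 - X 2 - X 3) - X 0 * X 1 * X 2 * X 3) * partialInv N =
      1 - (X 0 * X 1 * X 2 * X 3) ^ (N + 1) * negPowSeries N := by
  induction N with
  | zero =>
    rw [partialInv, sum_range_one, pow_zero, one_mul, zero_add, pow_one]
    linear_combination mul_negPowSeries_zero
  | succ N ih =>
    rw [partialInv, sum_range_succ, ← partialInv]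
    linear_combination ih + (X 0 * X 1 * X 2 * X 3) ^ (N + 1) * mul_negPowSeries_succ N

lemma eq_partialInv_add_of_mul_eq_one {F : MvPowerSeries (Fin 4) ℤ}
    (hF : ((1 - X 0 - X 1) * (1 - X 2 - X 3) - X 0 * X 1 * X 2 * X 3) * F = 1) (N : ℕ) :
    F = partialInv N + (X 0 * X 1 * X 2 * X 3) ^ (N + 1) * (negPowSeries N * F) := by
  linear_combination partialInv N * hF - F * mul_partialInv N

lemma negPowCoeff_sub_self_self {n k : ℕ} (hk : k ≤ n) :
    negPowCoeff (n - k) k k = (n.choose k : ℤ) * ((n + k).choose k : ℤ) := by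
  have h := Nat.choose_mul (n := n + k) (k := k + k) (s := k) (by omega)
  rw [Nat.add_sub_cancel, Nat.add_sub_cancel] at h
  rw [negPowCoeff, show k + k + (n - k) = n + k by omega,
    Nat.choose_symm_of_eq_add (show n + k = (n - k) + (k + k) by omega)]
  exact_mod_cast h.trans (mul_comm _ _)

end Apery

open Apery MvPowerSeries in
/-- The Apéry numbers `A(n) = ∑_{k=0}^n C(n,k)² C(n+k,k)²` are the diagonal Taylor
coefficients of the inverse of `(1 - x₁ - x₂)(1 - x₃ - x₄) - x₁x₂x₃x₄`. -/
theorem stmt0 (F : MvPowerSeries (Fin 4) ℤ)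
    (hF : ((1 - MvPowerSeries.X 0 - MvPowerSeries.X 1) *
        (1 - MvPowerSeries.X 2 - MvPowerSeries.X 3) -
        MvPowerSeries.X 0 * MvPowerSeries.X 1 * MvPowerSeries.X 2 * MvPowerSeries.X 3) * F = 1)
    (n : ℕ) :
    MvPowerSeries.coeff (Finsupp.equivFunOnFinite.symm fun _ => n) F =
      ∑ k ∈ Finset.range (n + 1), (n.choose k : ℤ) ^ 2 * ((n + k).choose k : ℤ) ^ 2 := by
  change coeff (diag n) F = _
  rw [eq_partialInv_add_of_mul_eq_one hF n, map_add, coeff_diag_X_mul_X_mul_X_mul_X_pow_mul,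
    if_neg (by omega), add_zero, partialInv, map_sum, ← Finset.sum_range_reflect]
  refine Finset.sum_congr rfl fun k hk => ?_
  have hk : k ≤ n := Nat.lt_succ_iff.mp (Finset.mem_range.mp hk)
  rw [coeff_diag_X_mul_X_mul_X_mul_X_pow_mul, if_pos (by omega), negPowSeries, coeff_prodSeries]
  simp only [diag_apply]
  rw [show n + 1 - 1 - k = n - k by omega, show n - (n - k) = k by omega, negPowCoeff_sub_self_self hk]
  ring
end

section
/- Let F be the multiplicative inverse, in the ring of formal power series ℤ[[x1, x2, x3, x4]], of the polynomial (1 - x1 - x2)(1 - x3 - x4) - x1·x2·x3·x4. Then for all natural numbers n1, n2, n3, n4, the coefficient of x1^{n1}·x2^{n2}·x3^{n3}·x4^{n4} in F equals Σ_{k=0}^{min(n1,n2,n3,n4)} C(n1, k)·C(n3, k)·C(n1+n2-k, n1)·C(n3+n4-k, n3), where C denotes the usual binomial coefficient. -/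
/-!
Write `a = 1 - x₁ - x₂`, `b = 1 - x₃ - x₄`, `u = x₁x₂`, `v = x₃x₄`. Formally
`1 / (ab - uv) = ∑ₖ (uᵏ / aᵏ⁺¹) (vᵏ / bᵏ⁺¹)`, and the coefficient of `xⁱ yʲ` in
`(xy)ᵏ / (1 - x - y)ᵏ⁺¹` is `C(i,k) C(i+j-k,i)`. To make this rigorous, let `Tₖ` be the series
whose coefficients are the products of these numbers. Pascal-type recurrences for them give
`ab T₀ = 1` and `ab Tₖ₊₁ = uv Tₖ`, so the geometric sum telescopes:
`(ab - uv) ∑_{k ≤ N} Tₖ = 1 - ab T_{N+1}`. Multiplying by `F`, the coefficients of `F` of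
`x₁`-degree at most `N` are those of `∑_{k ≤ N} Tₖ`, as `T_{N+1}` has no such monomials.
-/

open MvPowerSeries Finsupp

/-- The coefficient of `xⁱ yʲ` in `(xy)^k / (1 - x - y)^(k+1)`. -/
def pairCoeff (i j k : ℕ) : ℤ := i.choose k * (i + j - k).choose i

lemma pairCoeff_eq_zero_of_lt_left {i j k : ℕ} (h : i < k) : pairCoeff i j k = 0 := by
  simp [pairCoeff, Nat.choose_eq_zero_of_lt h]

lemma pairCoeff_eq_zero_of_lt_right {i j k : ℕ} (h : j < k) : pairCoeff i j k = 0 := by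
  rcases lt_or_ge i k with hi | hi
  · exact pairCoeff_eq_zero_of_lt_left hi
  · simp [pairCoeff, Nat.choose_eq_zero_of_lt (show i + j - k < i by omega)]

lemma pairCoeff_zero_eq_choose (i j : ℕ) : pairCoeff i j 0 = (i + j).choose i := by
  simp [pairCoeff]

lemma pairCoeff_succ_succ_succ (i j k : ℕ) :
    pairCoeff (i + 1) (j + 1) (k + 1) =
      pairCoeff i (j + 1) (k + 1) + pairCoeff (i + 1) j (k + 1) + pairCoeff i j k := by
  rcases lt_or_ge (i + j) k with h | h
  · rw [pairCoeff_eq_zero_of_lt_left (show i + 1 < k + 1 by omega),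
      pairCoeff_eq_zero_of_lt_left (show i < k + 1 by omega),
      pairCoeff_eq_zero_of_lt_left (show i + 1 < k + 1 by omega),
      pairCoeff_eq_zero_of_lt_left (show i < k by omega)]
    simp
  · simp only [pairCoeff, Nat.choose_succ_succ,
      show i + 1 + (j + 1) - (k + 1) = i + j - k + 1 by omega,
      show i + (j + 1) - (k + 1) = i + j - k by omega,
      show i + 1 + j - (k + 1) = i + j - k by omega]
    push_cast
    ring

lemma pairCoeff_succ_succ_zero (i j : ℕ) :
    pairCoeff (i + 1) (j + 1) 0 = pairCoeff i (j + 1) 0 + pairCoeff (i + 1) j 0 := by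
  simp only [pairCoeff_zero_eq_choose, show i + 1 + (j + 1) = i + j + 1 + 1 by omega,
    show i + (j + 1) = i + j + 1 by omega, show i + 1 + j = i + j + 1 by omega,
    Nat.choose_succ_succ (i + j + 1) i]
  push_cast
  ring

lemma pairCoeff_succ_recurrence (i j k : ℕ) :
    pairCoeff i j (k + 1) =
      (if i = 0 then 0 else pairCoeff (i - 1) j (k + 1)) +
      (if j = 0 then 0 else pairCoeff i (j - 1) (k + 1)) +
      (if i = 0 ∨ j = 0 then 0 else pairCoeff (i - 1) (j - 1) k) := by
  rcases i with _ | i <;> rcases j with _ | j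
  all_goals simp [pairCoeff_eq_zero_of_lt_left, pairCoeff_eq_zero_of_lt_right,
    pairCoeff_succ_succ_succ]

lemma pairCoeff_zero_recurrence (i j : ℕ) :
    pairCoeff i j 0 =
      (if i = 0 then 0 else pairCoeff (i - 1) j 0) +
      (if j = 0 then 0 else pairCoeff i (j - 1) 0) +
      (if i = 0 ∧ j = 0 then 1 else 0) := by
  rcases i with _ | i <;> rcases j with _ | j
  case succ.succ => simp [pairCoeff_succ_succ_zero]
  all_goals simp [pairCoeff_zero_eq_choose]

namespace MvPowerSeries

variable {σ R : Type*}

lemma coeff_X_mul' [Semiring R] (s : σ) (m : σ →₀ ℕ) (φ : MvPowerSeries σ R) :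
    coeff m (X s * φ) = if m s = 0 then 0 else coeff (m - single s 1) φ := by
  classical
  rw [X, coeff_monomial_mul]
  simp [single_le_iff, Nat.one_le_iff_ne_zero]

lemma coeff_one_sub_X_sub_X_mul [Ring R] (s t : σ) (m : σ →₀ ℕ) (φ : MvPowerSeries σ R) :
    coeff m ((1 - X s - X t) * φ) =
      coeff m φ - (if m s = 0 then 0 else coeff (m - single s 1) φ) -
        (if m t = 0 then 0 else coeff (m - single t 1) φ) := by
  simp only [sub_mul, one_mul, map_sub, coeff_X_mul']

lemma coeff_mul_eq_zero_of_forall_le [Semiring R] {m : σ →₀ ℕ} (φ : MvPowerSeries σ R)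
    {ψ : MvPowerSeries σ R} (h : ∀ q ≤ m, coeff q ψ = 0) : coeff m (φ * ψ) = 0 := by
  classical
  rw [coeff_mul]
  refine Finset.sum_eq_zero fun p hp => ?_
  rw [h p.2 (Finset.HasAntidiagonal.mem_antidiagonal.1 hp ▸ le_add_self), mul_zero]

end MvPowerSeries

section PairSeries

variable {σ : Type*} {s t : σ} {R : (σ →₀ ℕ) → ℤ}

/-- The coefficientwise product of `(X s X t)ᵏ / (1 - X s - X t)ᵏ⁺¹` with `R`. -/
def pairSeries (s t : σ) (k : ℕ) (R : (σ →₀ ℕ) → ℤ) : MvPowerSeries σ ℤ :=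
  fun m => pairCoeff (m s) (m t) k * R m

lemma coeff_pairSeries (k : ℕ) (m : σ →₀ ℕ) :
    coeff m (pairSeries s t k R) = pairCoeff (m s) (m t) k * R m := rfl

variable (hst : s ≠ t) (hRs : ∀ m, R (m - single s 1) = R m)
  (hRt : ∀ m, R (m - single t 1) = R m)
include hst

include hRs in
lemma coeff_tsub_left_pairSeries (k : ℕ) (m : σ →₀ ℕ) :
    coeff (m - single s 1) (pairSeries s t k R) = pairCoeff (m s - 1) (m t) k * R m := by
  simp [coeff_pairSeries, hRs, hst.symm]

include hRt in
lemma coeff_tsub_right_pairSeries (k : ℕ) (m : σ →₀ ℕ) :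
    coeff (m - single t 1) (pairSeries s t k R) = pairCoeff (m s) (m t - 1) k * R m := by
  simp [coeff_pairSeries, hRt, hst]

include hRs hRt

lemma one_sub_X_sub_X_mul_pairSeries_succ (k : ℕ) :
    (1 - X s - X t) * pairSeries s t (k + 1) R = X s * X t * pairSeries s t k R := by
  ext m
  rw [coeff_one_sub_X_sub_X_mul, mul_assoc, coeff_X_mul', coeff_X_mul',
    coeff_tsub_left_pairSeries hst hRs, coeff_tsub_right_pairSeries hst hRt,
    coeff_tsub_right_pairSeries hst hRt, coeff_pairSeries, pairCoeff_succ_recurrence]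
  simp only [tsub_apply, single_eq_same, single_eq_of_ne hst.symm, hRs, tsub_zero]
  split_ifs <;> simp_all
  ring

lemma coeff_one_sub_X_sub_X_mul_pairSeries_zero (m : σ →₀ ℕ) :
    coeff m ((1 - X s - X t) * pairSeries s t 0 R) = if m s = 0 ∧ m t = 0 then R m else 0 := by
  rw [coeff_one_sub_X_sub_X_mul, coeff_tsub_left_pairSeries hst hRs,
    coeff_tsub_right_pairSeries hst hRt, coeff_pairSeries, pairCoeff_zero_recurrence]
  split_ifs <;> simp_all
  ring

end PairSeries

/-- `(x₀x₁)ʲ (x₂x₃)ᵏ / ((1 - x₀ - x₁)ʲ⁺¹ (1 - x₂ - x₃)ᵏ⁺¹)` -/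
def doubleSeries (j k : ℕ) : MvPowerSeries (Fin 4) ℤ :=
  fun m => pairCoeff (m 0) (m 1) j * pairCoeff (m 2) (m 3) k

lemma coeff_doubleSeries (j k : ℕ) (m : Fin 4 →₀ ℕ) :
    coeff m (doubleSeries j k) = pairCoeff (m 0) (m 1) j * pairCoeff (m 2) (m 3) k := rfl

lemma doubleSeries_eq_pairSeries_left (j k : ℕ) :
    doubleSeries j k = pairSeries 0 1 j (fun m => pairCoeff (m 2) (m 3) k) := rfl

lemma doubleSeries_eq_pairSeries_right (j k : ℕ) :
    doubleSeries j k = pairSeries 2 3 k (fun m => pairCoeff (m 0) (m 1) j) :=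
  funext fun _ => mul_comm _ _

lemma one_sub_X_sub_X_mul_doubleSeries_succ_left (j k : ℕ) :
    (1 - X 0 - X 1) * doubleSeries (j + 1) k = X 0 * X 1 * doubleSeries j k := by
  simp only [doubleSeries_eq_pairSeries_left]
  exact one_sub_X_sub_X_mul_pairSeries_succ (by decide) (fun m => by simp) (fun m => by simp) j

lemma one_sub_X_sub_X_mul_doubleSeries_succ_right (j k : ℕ) :
    (1 - X 2 - X 3) * doubleSeries j (k + 1) = X 2 * X 3 * doubleSeries j k := by
  simp only [doubleSeries_eq_pairSeries_right]
  exact one_sub_X_sub_X_mul_pairSeries_succ (by decide) (fun m => by simp) (fun m => by simp) k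

lemma mul_doubleSeries_succ (k : ℕ) :
    (1 - X 0 - X 1) * (1 - X 2 - X 3) * doubleSeries (k + 1) (k + 1) =
      X 0 * X 1 * X 2 * X 3 * doubleSeries k k := by
  calc _ = (1 - X 2 - X 3) * ((1 - X 0 - X 1) * doubleSeries (k + 1) (k + 1)) := by ring
    _ = X 0 * X 1 * ((1 - X 2 - X 3) * doubleSeries k (k + 1)) := by
      rw [one_sub_X_sub_X_mul_doubleSeries_succ_left]; ring
    _ = _ := by rw [one_sub_X_sub_X_mul_doubleSeries_succ_right]; ring

lemma mul_doubleSeries_zero :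
    (1 - X 0 - X 1) * (1 - X 2 - X 3) * doubleSeries 0 0 = (1 : MvPowerSeries (Fin 4) ℤ) := by
  have h : (1 - X 2 - X 3) * doubleSeries 0 0 =
      pairSeries 0 1 0 (fun m => if m 2 = 0 ∧ m 3 = 0 then 1 else 0) := by
    ext m
    rw [doubleSeries_eq_pairSeries_right, coeff_one_sub_X_sub_X_mul_pairSeries_zero (by decide)
      (fun m => by simp) (fun m => by simp), coeff_pairSeries]
    split_ifs <;> simp
  ext m
  rw [mul_assoc, h, coeff_one_sub_X_sub_X_mul_pairSeries_zero (by decide)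
    (fun m => by simp) (fun m => by simp), coeff_one]
  have hm : m = 0 ↔ m 0 = 0 ∧ m 1 = 0 ∧ m 2 = 0 ∧ m 3 = 0 := by
    simp [Finsupp.ext_iff, Fin.forall_fin_succ]
  simp only [hm]
  split_ifs <;> simp_all

lemma mul_sum_doubleSeries (N : ℕ) :
    ((1 - X 0 - X 1) * (1 - X 2 - X 3) - X 0 * X 1 * X 2 * X 3) *
        ∑ k ∈ Finset.range (N + 1), doubleSeries k k =
      1 - (1 - X 0 - X 1) * (1 - X 2 - X 3) * doubleSeries (N + 1) (N + 1) := by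
  induction N with
  | zero =>
    rw [Finset.sum_range_one]
    linear_combination mul_doubleSeries_zero + mul_doubleSeries_succ 0
  | succ N ih =>
    rw [Finset.sum_range_succ]
    linear_combination ih + mul_doubleSeries_succ (N + 1)

lemma coeff_eq_sum_of_mul_eq_one {F : MvPowerSeries (Fin 4) ℤ}
    (hF : ((1 - X 0 - X 1) * (1 - X 2 - X 3) - X 0 * X 1 * X 2 * X 3) * F = 1)
    (m : Fin 4 →₀ ℕ) :
    coeff m F =
      ∑ k ∈ Finset.range (m 0 + 1), pairCoeff (m 0) (m 1) k * pairCoeff (m 2) (m 3) k := by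
  have hF' : F = ∑ k ∈ Finset.range (m 0 + 1), doubleSeries k k +
      F * (1 - X 0 - X 1) * (1 - X 2 - X 3) * doubleSeries (m 0 + 1) (m 0 + 1) := by
    linear_combination (∑ k ∈ Finset.range (m 0 + 1), doubleSeries k k) * hF -
      F * mul_sum_doubleSeries (m 0)
  have htail : coeff m (F * (1 - X 0 - X 1) * (1 - X 2 - X 3) *
      doubleSeries (m 0 + 1) (m 0 + 1)) = 0 :=
    coeff_mul_eq_zero_of_forall_le _ fun q hq => by
      rw [coeff_doubleSeries, pairCoeff_eq_zero_of_lt_left (Nat.lt_succ_of_le (hq 0)), zero_mul]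
  rw [hF', map_add, htail, add_zero, map_sum]
  rfl

lemma sum_pairCoeff_mul_pairCoeff (n1 n2 n3 n4 : ℕ) :
    ∑ k ∈ Finset.range (n1 + 1), pairCoeff n1 n2 k * pairCoeff n3 n4 k =
      ∑ k ∈ Finset.range (min (min n1 n2) (min n3 n4) + 1),
        (n1.choose k : ℤ) * (n3.choose k : ℤ) *
          ((n1 + n2 - k).choose n1 : ℤ) * ((n3 + n4 - k).choose n3 : ℤ) := by
  symm
  refine Finset.sum_subset_zero_on_sdiff (Finset.range_subset_range.2 (by omega)) ?_ ?_
  · intro k hk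
    simp only [Finset.mem_sdiff, Finset.mem_range] at hk
    obtain h | h | h | h : n1 < k ∨ n2 < k ∨ n3 < k ∨ n4 < k := by omega
    · rw [pairCoeff_eq_zero_of_lt_left h, zero_mul]
    · rw [pairCoeff_eq_zero_of_lt_right h, zero_mul]
    · rw [pairCoeff_eq_zero_of_lt_left h, mul_zero]
    · rw [pairCoeff_eq_zero_of_lt_right h, mul_zero]
  · intro k _
    simp only [pairCoeff]
    ring

/-- The Taylor coefficients of the inverse of `(1 - x₁ - x₂)(1 - x₃ - x₄) - x₁x₂x₃x₄` are
`A(n₁,n₂,n₃,n₄) = ∑_k C(n₁,k) C(n₃,k) C(n₁+n₂-k,n₁) C(n₃+n₄-k,n₃)`. -/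
theorem stmt1 (F : MvPowerSeries (Fin 4) ℤ)
    (hF : ((1 - MvPowerSeries.X 0 - MvPowerSeries.X 1) *
        (1 - MvPowerSeries.X 2 - MvPowerSeries.X 3) -
        MvPowerSeries.X 0 * MvPowerSeries.X 1 * MvPowerSeries.X 2 * MvPowerSeries.X 3) * F = 1)
    (n1 n2 n3 n4 : ℕ) :
    MvPowerSeries.coeff (Finsupp.equivFunOnFinite.symm ![n1, n2, n3, n4]) F =
      ∑ k ∈ Finset.range (min (min n1 n2) (min n3 n4) + 1),
        (n1.choose k : ℤ) * (n3.choose k : ℤ) *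
          ((n1 + n2 - k).choose n1 : ℤ) * ((n3 + n4 - k).choose n3 : ℤ) := by
  rw [coeff_eq_sum_of_mul_eq_one hF]
  exact sum_pairCoeff_mul_pairCoeff n1 n2 n3 n4
end

section
/- Define A(n) = Σ_{k ∈ ℤ} binom(n, k)²·binom(n+k, k)² for every integer n (this sum has only finitely many nonzero terms). Then for every integer n, A(-n) = A(n-1). -/
/-- The generalized binomial coefficient for integer entries: for `k ≥ 0` it is
`n(n-1)⋯(n-k+1)/k!`; for `k < 0` and `n - k ≥ 0` it is `binom n (n-k)`; and it is `0`
when `k < 0` and `n - k < 0`. -/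
def binom (n k : ℤ) : ℤ :=
  if 0 ≤ k then (∏ i ∈ Finset.range k.toNat, (n - (i : ℤ))) / (k.toNat.factorial : ℤ)
  else if 0 ≤ n - k then
    (∏ i ∈ Finset.range (n - k).toNat, (n - (i : ℤ))) / ((n - k).toNat.factorial : ℤ)
  else 0

/-- The Apéry numbers extended to all integers:
`A(n) = ∑_{k ∈ ℤ} binom(n,k)² binom(n+k,k)²` (a finite sum). -/
noncomputable def A (n : ℤ) : ℤ :=
  ∑ᶠ k : ℤ, binom n k ^ 2 * binom (n + k) k ^ 2

/-!
For `k ≥ 0`, `binom n k` is Mathlib's `Ring.choose n k`, so upper negation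
`binom (-n) k = ±binom (n + k - 1) k` turns the `k`-th term of `A (-n)` into that of `A (n - 1)`
with its two factors swapped. For `k < 0` every term vanishes on both sides: `binom n k` is zero
when `n ≥ 0` (the product defining it contains the factor `n - n`), and `binom (n + k) k` is
zero when `n < 0`.
-/

theorem binom_natCast_right (n : ℤ) (k : ℕ) : binom n k = Ring.choose n k := by
  have h : ∏ i ∈ Finset.range k, (n - (i : ℤ)) = k.factorial * Ring.choose n k := by
    rw [← descPochhammer_eval_eq_prod_range, Polynomial.eval_eq_smeval,
      Ring.descPochhammer_eq_factorial_smul_choose, nsmul_eq_mul]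
  rw [binom, if_pos k.cast_nonneg, Int.toNat_natCast, h,
    Int.mul_ediv_cancel_left _ (by exact_mod_cast k.factorial_ne_zero)]

theorem binom_neg_sq (n : ℤ) (k : ℕ) : binom (-n) k ^ 2 = binom (n + k - 1) k ^ 2 := by
  rw [binom_natCast_right, binom_natCast_right, Ring.choose_neg, Units.smul_def, smul_eq_mul,
    mul_pow, ← Units.val_pow_eq_pow_val, Int.units_sq, Units.val_one, one_mul]

theorem binom_mul_binom_add_eq_zero (n : ℤ) {k : ℤ} (hk : k < 0) :
    binom n k * binom (n + k) k = 0 := by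
  rcases le_or_gt 0 n with hn | hn
  · have hzero : binom n k = 0 := by
      rw [binom, if_neg hk.not_ge, if_pos (by omega), Finset.prod_eq_zero
        (i := n.toNat) (Finset.mem_range.mpr (by omega)) (by omega), Int.zero_ediv]
    rw [hzero, zero_mul]
  · have hzero : binom (n + k) k = 0 := by
      rw [binom, if_neg hk.not_ge, if_neg (by omega)]
    rw [hzero, mul_zero]

/-- The reflection identity `A(-n) = A(n-1)` for the extended Apéry numbers. -/
theorem stmt3 (n : ℤ) : A (-n) = A (n - 1) := by
  refine finsum_congr fun k => ?_
  rcases le_or_gt 0 k with hk | hk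
  · lift k to ℕ using hk
    rw [show -n + k = -(n - k) by ring, binom_neg_sq, binom_neg_sq, sub_add_cancel, mul_comm,
      add_sub_right_comm]
  · rw [← mul_pow, ← mul_pow, binom_mul_binom_add_eq_zero _ hk,
      binom_mul_binom_add_eq_zero _ hk]
end

section
/- Let F be the multiplicative inverse, in the ring of formal power series ℤ[[x1, x2, x3, x4]], of the polynomial (1 - x1 - x2)(1 - x3 - x4) - x1·x2·x3·x4. Then for all natural numbers n1, n2, n3, n4, the coefficient of x1^{n1}·x2^{n2}·x3^{n3}·x4^{n4} in F equals the coefficient of x1^{n1}·x2^{n2}·x3^{n3}·x4^{n4} in the polynomial (x1 + x2 + x3)^{n1}·(x1 + x2)^{n2}·(x3 + x4)^{n3}·(x2 + x3 + x4)^{n4}. -/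
/-!
Write `P = (1 - x₁ - x₂)(1 - x₃ - x₄) - x₁x₂x₃x₄`, which is `det (1 - A · diag x)` for the
matrix `A` whose rows are the coefficient vectors of the linear forms
`L = (x₁+x₂+x₃, x₁+x₂, x₃+x₄, x₂+x₃+x₄)`, and let `G` be the series whose `m`-th coefficient is
the `m`-th coefficient of `Q m = ∏ Lᵢ ^ mᵢ`. It suffices to show `P * G = 1` (MacMahon's master
theorem for this `A`). As `P` is multilinear, `[x^m] (P * G) = [x^m] ∑_d P_d x^d Q (m - d)`, and
variables outside the support `S` of `m` may be set to zero in this sum. Then every surviving term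
has `d ≤ m`, so with `m = k + 1_S` the sum factors as `Q k` times the principal `S`-minor of
`diag L - A · diag x` with the variables outside `S` set to zero. That matrix has zero row sums,
so the minor vanishes unless `S = ∅`.
-/

open MvPolynomial

section

variable {σ R : Type*} [CommSemiring R]

noncomputable def diagonalSeries (Q : (σ →₀ ℕ) → MvPolynomial σ R) : MvPowerSeries σ R :=
  fun m => (Q m).coeff m

@[simp]
theorem coeff_diagonalSeries (Q : (σ →₀ ℕ) → MvPolynomial σ R) (m : σ →₀ ℕ) :
    MvPowerSeries.coeff m (diagonalSeries Q) = (Q m).coeff m :=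
  rfl

theorem coeff_monomial_mul_diagonalSeries (Q : (σ →₀ ℕ) → MvPolynomial σ R)
    (d m : σ →₀ ℕ) (r : R) :
    MvPowerSeries.coeff m (MvPowerSeries.monomial d r * diagonalSeries Q) =
      (monomial d r * Q (m - d)).coeff m := by
  rw [MvPowerSeries.coeff_monomial_mul, coeff_monomial_mul', coeff_diagonalSeries]

/-- The linear map `p ↦ ∑_d p_d x^d Q (m - d)`, with truncated subtraction `m - d`. -/
noncomputable def shiftedProduct (Q : (σ →₀ ℕ) → MvPolynomial σ R) (m : σ →₀ ℕ) :
    MvPolynomial σ R →ₗ[R] MvPolynomial σ R :=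
  (basisMonomials σ R).constr R fun d => monomial d 1 * Q (m - d)

theorem shiftedProduct_monomial (Q : (σ →₀ ℕ) → MvPolynomial σ R) (m d : σ →₀ ℕ) (r : R) :
    shiftedProduct Q m (monomial d r) = monomial d r * Q (m - d) := by
  have h := (basisMonomials σ R).constr_basis R (fun d => monomial d 1 * Q (m - d)) d
  rw [coe_basisMonomials] at h
  rw [← mul_one r, ← smul_eq_mul, ← smul_monomial, map_smul, shiftedProduct, h, smul_mul_assoc]

theorem coeff_coe_mul_diagonalSeries (Q : (σ →₀ ℕ) → MvPolynomial σ R) (m : σ →₀ ℕ)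
    (p : MvPolynomial σ R) :
    MvPowerSeries.coeff m ((p : MvPowerSeries σ R) * diagonalSeries Q) =
      (shiftedProduct Q m p).coeff m := by
  induction p using MvPolynomial.induction_on' with
  | monomial d r =>
    rw [coe_monomial, coeff_monomial_mul_diagonalSeries, shiftedProduct_monomial]
  | add p q hp hq => rw [coe_add, add_mul, map_add, hp, hq, map_add, coeff_add]

theorem coeff_bind₁_indicator_compl_X (Z : Set σ)
    (p : MvPolynomial σ R) {m : σ →₀ ℕ} (hm : ∀ i ∈ Z, m i = 0) :
    (bind₁ (Zᶜ.indicator X) p).coeff m = p.coeff m := by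
  classical
  induction p using MvPolynomial.induction_on generalizing m with
  | C a => simp
  | add p q hp hq => rw [map_add, coeff_add, coeff_add, hp hm, hq hm]
  | mul_X p i hp =>
    by_cases hi : i ∈ Z
    · simp [Set.indicator_of_notMem (Set.notMem_compl_iff.2 hi), coeff_mul_X', hm i hi]
    · rw [map_mul, bind₁_X_right, Set.indicator_of_mem (Set.mem_compl hi), coeff_mul_X',
        coeff_mul_X']
      split_ifs
      · exact hp fun j hj => by simp [hm j hj]
      · rfl

end

namespace MacMahonExample

noncomputable def L : Fin 4 → MvPolynomial (Fin 4) ℤ :=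
  ![X 0 + X 1 + X 2, X 0 + X 1, X 2 + X 3, X 1 + X 2 + X 3]

noncomputable def Q (m : Fin 4 →₀ ℕ) : MvPolynomial (Fin 4) ℤ := ∏ i, L i ^ m i

noncomputable def P : MvPolynomial (Fin 4) ℤ :=
  (1 - X 0 - X 1) * (1 - X 2 - X 3) - X 0 * X 1 * X 2 * X 3

open Finsupp in
theorem P_eq_sum_monomial : P = monomial 0 1 - monomial (single 0 1) 1
    - monomial (single 1 1) 1 - monomial (single 2 1) 1 - monomial (single 3 1) 1
    + monomial (single 0 1 + single 2 1) 1 + monomial (single 0 1 + single 3 1) 1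
    + monomial (single 1 1 + single 2 1) 1 + monomial (single 1 1 + single 3 1) 1
    - monomial (single 0 1 + single 1 1 + single 2 1 + single 3 1) 1 := by
  simp only [monomial_eq, Finsupp.prod_fintype _ _ (fun _ => pow_zero _), Fin.prod_univ_four]
  simp [P]
  ring

-- One case per support of `m`, i.e. per principal minor in the argument of the header.
theorem bind₁_shiftedProduct_P (m : Fin 4 →₀ ℕ) :
    bind₁ ({i | m i = 0}ᶜ.indicator X) (shiftedProduct Q m P) = if m = 0 then 1 else 0 := by
  rw [P_eq_sum_monomial]
  simp only [map_sub, map_add, shiftedProduct_monomial]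
  simp only [monomial_eq, Finsupp.prod_fintype _ _ (fun _ => pow_zero _), Fin.prod_univ_four, Q]
  split_ifs with hm
  · subst hm
    simp
  · have zero_or_succ (i : Fin 4) : m i = 0 ∨ ∃ k, m i = k + 1 :=
      (m i).eq_zero_or_pos.imp_right Nat.exists_eq_add_one.mpr
    rcases zero_or_succ 0 with h0 | ⟨k0, h0⟩ <;> rcases zero_or_succ 1 with h1 | ⟨k1, h1⟩ <;>
      rcases zero_or_succ 2 with h2 | ⟨k2, h2⟩ <;> rcases zero_or_succ 3 with h3 | ⟨k3, h3⟩
    · exact absurd (Finsupp.ext fun i => by fin_cases i <;> assumption) hm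
    all_goals
      simp [h0, h1, h2, h3, L]
      ring

theorem coe_P_mul_diagonalSeries_Q : (P : MvPowerSeries (Fin 4) ℤ) * diagonalSeries Q = 1 := by
  ext m
  rw [coeff_coe_mul_diagonalSeries,
    ← coeff_bind₁_indicator_compl_X {i | m i = 0} _ fun _ hi => hi, bind₁_shiftedProduct_P,
    MvPowerSeries.coeff_one]
  split_ifs with hm
  · rw [hm, coeff_zero_one]
  · exact coeff_zero m

end MacMahonExample

open MacMahonExample in
/-- The coefficient of `x₁^{n₁}x₂^{n₂}x₃^{n₃}x₄^{n₄}` in the inverse of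
`(1 - x₁ - x₂)(1 - x₃ - x₄) - x₁x₂x₃x₄` equals the coefficient of the same monomial in
`(x₁+x₂+x₃)^{n₁} (x₁+x₂)^{n₂} (x₃+x₄)^{n₃} (x₂+x₃+x₄)^{n₄}`. -/
theorem stmt4 (F : MvPowerSeries (Fin 4) ℤ)
    (hF : ((1 - MvPowerSeries.X 0 - MvPowerSeries.X 1) *
        (1 - MvPowerSeries.X 2 - MvPowerSeries.X 3) -
        MvPowerSeries.X 0 * MvPowerSeries.X 1 * MvPowerSeries.X 2 * MvPowerSeries.X 3) * F = 1)
    (n1 n2 n3 n4 : ℕ) :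
    MvPowerSeries.coeff (Finsupp.equivFunOnFinite.symm ![n1, n2, n3, n4]) F =
      MvPolynomial.coeff (Finsupp.equivFunOnFinite.symm ![n1, n2, n3, n4])
        ((MvPolynomial.X 0 + MvPolynomial.X 1 + MvPolynomial.X 2) ^ n1 *
          (MvPolynomial.X 0 + MvPolynomial.X 1) ^ n2 *
          (MvPolynomial.X 2 + MvPolynomial.X 3) ^ n3 *
          (MvPolynomial.X 1 + MvPolynomial.X 2 + MvPolynomial.X 3) ^ n4 :
          MvPolynomial (Fin 4) ℤ) := by
  have hPF : (P : MvPowerSeries (Fin 4) ℤ) * F = 1 := by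
    rw [← coeToMvPowerSeries.ringHom_apply, P]
    simpa only [map_sub, map_mul, map_one, coeToMvPowerSeries.ringHom_apply, coe_X] using hF
  have hFG : F = diagonalSeries Q :=
    left_inv_eq_right_inv (by rwa [mul_comm]) coe_P_mul_diagonalSeries_Q
  subst hFG
  simp [Q, L, Fin.prod_univ_four]
end

section
/- Let G be the multiplicative inverse, in the ring of formal power series ℤ[[x1, x2, x3]], of the polynomial (1 - x1 - x2)(1 - x3) - x1·x2·x3. Then for all natural numbers n1, n2, n3, the coefficient of x1^{n1}·x2^{n2}·x3^{n3} in G equals Σ_{k=0}^{min(n1,n2,n3)} C(n1, k)·C(n3, k)·C(n1+n2-k, n1); in particular, for every natural number n the coefficient of x1^n·x2^n·x3^n in G equals B(n) = Σ_{k=0}^{n} C(n, k)²·C(n+k, k), where C denotes the usual binomial coefficient. -/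
/-!
Write `D = Q - x₀x₁x₂` with `Q = (1 - x₀ - x₁)(1 - x₂)`. The `k`-th summand
`Tₖ(a,b,c) = C(a,k) C(c,k) C(a+b-k,a)` has generating function `(x₀x₁x₂)ᵏ / Q^(k+1)`;
coefficientwise this is the Pascal-rule identity `Q Tₖ₊₁ = x₀x₁x₂ Tₖ` (with `Q T₀ = 1`), and
summing over `k` gives `D F = 1` for the series `F` with coefficients `B(a,b,c)`, so `F = G`.
The diagonal formula is the reindexing `k ↦ n - k`.
-/

open Finset MvPowerSeries

def aperyTerm (k a b c : ℕ) : ℤ := (a.choose k : ℤ) * c.choose k * (a + b - k).choose a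

def aperyB (a b c : ℕ) : ℤ := ∑ k ∈ range (min a (min b c) + 1), aperyTerm k a b c

theorem aperyTerm_eq_zero {k a b c : ℕ} (hk : min a (min b c) < k) : aperyTerm k a b c = 0 := by
  rcases lt_or_ge a k with ha | ha
  · simp [aperyTerm, Nat.choose_eq_zero_of_lt ha]
  rcases lt_or_ge c k with hc | hc
  · simp [aperyTerm, Nat.choose_eq_zero_of_lt hc]
  -- here `b < k`, so the truncated difference `a + b - k` is below `a`
  simp [aperyTerm, Nat.choose_eq_zero_of_lt (show a + b - k < a by omega)]

theorem aperyB_eq_sum_range {a b c N : ℕ} (hN : min a (min b c) < N) :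
    aperyB a b c = ∑ k ∈ range N, aperyTerm k a b c :=
  sum_subset (range_subset_range.2 hN) fun _ _ hk ↦
    aperyTerm_eq_zero (by rw [mem_range, not_lt] at hk; omega)

@[simp] theorem aperyB_zero_left (b c : ℕ) : aperyB 0 b c = 1 := by simp [aperyB, aperyTerm]

@[simp] theorem aperyB_zero_mid (a c : ℕ) : aperyB a 0 c = 1 := by simp [aperyB, aperyTerm]

@[simp] theorem aperyB_zero_right (a b : ℕ) : aperyB a b 0 = (a + b).choose a := by
  simp [aperyB, aperyTerm]

theorem aperyB_diag (n : ℕ) :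
    aperyB n n n = ∑ k ∈ range (n + 1), (n.choose k : ℤ) ^ 2 * (n + k).choose k := by
  rw [aperyB, min_self, min_self, ← sum_range_reflect]
  refine sum_congr rfl fun k hk ↦ ?_
  have hkn : k ≤ n := Nat.lt_succ_iff.1 (mem_range.1 hk)
  rw [aperyTerm, Nat.add_sub_cancel, Nat.choose_symm hkn, show n + n - (n - k) = n + k by omega,
    ← Nat.choose_symm_add]
  ring

/-- The coefficient at `(a+1, b+1, c+1)` of `(1 - x₀ - x₁)(1 - x₂) f`. -/
def qDiff (f : ℕ → ℕ → ℕ → ℤ) (a b c : ℕ) : ℤ :=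
  f (a + 1) (b + 1) (c + 1) - f a (b + 1) (c + 1) - f (a + 1) b (c + 1) - f (a + 1) (b + 1) c
    + f a (b + 1) c + f (a + 1) b c

theorem qDiff_sum {ι : Type*} (s : Finset ι) (f : ι → ℕ → ℕ → ℕ → ℤ) (a b c : ℕ) :
    qDiff (fun a b c ↦ ∑ i ∈ s, f i a b c) a b c = ∑ i ∈ s, qDiff (f i) a b c := by
  simp only [qDiff, sum_add_distrib, sum_sub_distrib]

theorem qDiff_aperyTerm_zero (a b c : ℕ) : qDiff (aperyTerm 0) a b c = 0 := by
  simp only [qDiff, aperyTerm, Nat.choose_zero_right, Nat.sub_zero]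
  ring

theorem qDiff_aperyTerm_succ {k a b : ℕ} (hk : k ≤ a + b) (c : ℕ) :
    qDiff (aperyTerm (k + 1)) a b c = aperyTerm k a b c := by
  simp only [qDiff, aperyTerm, show a + 1 + (b + 1) - (k + 1) = (a + b - k) + 1 by omega,
    show a + (b + 1) - (k + 1) = a + b - k by omega, show a + 1 + b - (k + 1) = a + b - k by omega,
    Nat.choose_succ_succ (a + b - k), Nat.choose_succ_succ a, Nat.choose_succ_succ c]
  push_cast
  ring

theorem qDiff_aperyB (a b c : ℕ) : qDiff aperyB a b c = aperyB a b c := by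
  have hsum : ∀ a' b' c', a' ≤ a + 1 →
      aperyB a' b' c' = ∑ k ∈ range (a + 2), aperyTerm k a' b' c' :=
    fun a' b' c' ha' ↦ aperyB_eq_sum_range (by omega)
  calc qDiff aperyB a b c
      = qDiff (fun a' b' c' ↦ ∑ k ∈ range (a + 2), aperyTerm k a' b' c') a b c := by
        simp only [qDiff, hsum _ _ _ le_rfl, hsum _ _ _ (Nat.le_succ a)]
    _ = ∑ k ∈ range (a + 1), aperyTerm k a b c := by
        rw [qDiff_sum, sum_range_succ', qDiff_aperyTerm_zero, add_zero]
        exact sum_congr rfl fun k hk ↦ qDiff_aperyTerm_succ (by simp at hk; omega) c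
    _ = aperyB a b c := (aperyB_eq_sum_range (by omega)).symm

noncomputable def tri (a b c : ℕ) : Fin 3 →₀ ℕ := Finsupp.equivFunOnFinite.symm ![a, b, c]

theorem eq_tri (d : Fin 3 →₀ ℕ) : d = tri (d 0) (d 1) (d 2) := by
  ext i; fin_cases i <;> rfl

theorem tri_le_tri {a b c i j k : ℕ} : tri i j k ≤ tri a b c ↔ i ≤ a ∧ j ≤ b ∧ k ≤ c := by
  simp [Finsupp.le_def, Fin.forall_fin_succ, tri]

theorem tri_sub_tri (a b c i j k : ℕ) : tri a b c - tri i j k = tri (a - i) (b - j) (c - k) := by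
  ext i; fin_cases i <;> rfl

theorem tri_add_tri (a b c i j k : ℕ) : tri a b c + tri i j k = tri (a + i) (b + j) (c + k) := by
  ext i; fin_cases i <;> rfl

theorem tri_eq_zero {a b c : ℕ} : tri a b c = 0 ↔ a = 0 ∧ b = 0 ∧ c = 0 := by
  simp [← Finsupp.coe_eq_zero, tri, funext_iff, Fin.forall_fin_succ]

section

variable {R : Type*} [CommRing R]

theorem coeff_monomial_tri_mul (φ : MvPowerSeries (Fin 3) R) (a b c i j k : ℕ) :
    coeff (tri a b c) (monomial (tri i j k) 1 * φ) =
      if i ≤ a ∧ j ≤ b ∧ k ≤ c then coeff (tri (a - i) (b - j) (c - k)) φ else 0 := by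
  simp only [coeff_monomial_mul, tri_le_tri, tri_sub_tri, one_mul]

variable (R) in
noncomputable def aperyDenom : MvPowerSeries (Fin 3) R :=
  (1 - X 0 - X 1) * (1 - X 2) - X 0 * X 1 * X 2

theorem aperyDenom_eq : aperyDenom R = 1 - monomial (tri 1 0 0) 1 - monomial (tri 0 1 0) 1
    - monomial (tri 0 0 1) 1 + monomial (tri 1 0 1) 1 + monomial (tri 0 1 1) 1
    - monomial (tri 1 1 1) 1 := by
  have h₀ : (X 0 : MvPowerSeries (Fin 3) R) = monomial (tri 1 0 0) 1 :=
    congrArg (monomial · 1) (Finsupp.ext fun j ↦ by fin_cases j <;> simp [tri])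
  have h₁ : (X 1 : MvPowerSeries (Fin 3) R) = monomial (tri 0 1 0) 1 :=
    congrArg (monomial · 1) (Finsupp.ext fun j ↦ by fin_cases j <;> simp [tri])
  have h₂ : (X 2 : MvPowerSeries (Fin 3) R) = monomial (tri 0 0 1) 1 :=
    congrArg (monomial · 1) (Finsupp.ext fun j ↦ by fin_cases j <;> simp [tri])
  simp only [aperyDenom, h₀, h₁, h₂, mul_sub, sub_mul, one_mul, mul_one, monomial_mul_monomial,
    tri_add_tri]
  ring

end

noncomputable def aperySeries : MvPowerSeries (Fin 3) ℤ := fun d ↦ aperyB (d 0) (d 1) (d 2)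

theorem coeff_tri_aperySeries (a b c : ℕ) : coeff (tri a b c) aperySeries = aperyB a b c := rfl

theorem aperyDenom_mul_aperySeries : aperyDenom ℤ * aperySeries = 1 := by
  ext d
  rw [eq_tri d, aperyDenom_eq]
  generalize d 0 = a, d 1 = b, d 2 = c
  simp only [sub_mul, add_mul, one_mul, map_add, map_sub, coeff_monomial_tri_mul,
    coeff_tri_aperySeries, coeff_one, tri_eq_zero]
  rcases a with _ | a <;> rcases b with _ | b <;> rcases c with _ | c <;> simp
  · rw [show a + 1 + (b + 1) = a + (b + 1) + 1 by ring, Nat.choose_succ_succ,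
      show a + (b + 1) = a + 1 + b by ring]
    push_cast
    ring
  · have h := qDiff_aperyB a b c
    rw [qDiff] at h
    linear_combination h

/-- The Taylor coefficients of the inverse of `(1 - x₁ - x₂)(1 - x₃) - x₁x₂x₃` are
`B(n₁,n₂,n₃) = ∑_k C(n₁,k) C(n₃,k) C(n₁+n₂-k,n₁)`; in particular the diagonal coefficients
are the Apéry-like numbers `B(n) = ∑_k C(n,k)² C(n+k,k)` related to ζ(2). -/
theorem stmt8 (G : MvPowerSeries (Fin 3) ℤ)
    (hG : ((1 - MvPowerSeries.X 0 - MvPowerSeries.X 1) * (1 - MvPowerSeries.X 2) -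
        MvPowerSeries.X 0 * MvPowerSeries.X 1 * MvPowerSeries.X 2) * G = 1) :
    (∀ n1 n2 n3 : ℕ,
      MvPowerSeries.coeff (Finsupp.equivFunOnFinite.symm ![n1, n2, n3]) G =
        ∑ k ∈ Finset.range (min n1 (min n2 n3) + 1),
          (n1.choose k : ℤ) * (n3.choose k : ℤ) * ((n1 + n2 - k).choose n1 : ℤ)) ∧
    (∀ n : ℕ,
      MvPowerSeries.coeff (Finsupp.equivFunOnFinite.symm fun _ => n) G =
        ∑ k ∈ Finset.range (n + 1),
          (n.choose k : ℤ) ^ 2 * ((n + k).choose k : ℤ)) := by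
  have hGF : G = aperySeries :=
    left_inv_eq_right_inv (mul_comm G _ ▸ hG : G * aperyDenom ℤ = 1) aperyDenom_mul_aperySeries
  subst hGF
  exact ⟨fun _ _ _ ↦ rfl, aperyB_diag⟩
end

section
/- For every natural number n, Σ_{k=0}^{n} C(n, k)²·C(n+k, k) = Σ_{k=0}^{n} (-1)^{n+k}·C(n, k)·C(n+k, k)², where C denotes the usual binomial coefficient and the identity is an equality of integers. -/
/-!
Expand one factor `C(n+k, k)` on the right by Vandermonde, `C(n+k, k) = ∑_j C(n, j) C(k, j)`,
and exchange the sums. Since `C(n, k) C(k, j) = C(n, j) C(n-j, k-j)`, the inner sum over `k` is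
`C(n, j)` times an `(n-j)`-th forward difference of `x ↦ C(x, n)`, which equals `C(n+j, j)`.
What remains is the left-hand side.
-/

open Finset

theorem Nat.add_choose_eq_sum_range_choose_mul_choose (m n N : ℕ) (hN : n ≤ N) :
    (m + n).choose n = ∑ j ∈ range (N + 1), m.choose j * n.choose j := by
  rw [Nat.add_choose_eq, Nat.sum_antidiagonal_eq_sum_range_succ_mk]
  refine (sum_congr rfl fun j hj => ?_).trans
    (sum_subset (range_subset_range.2 (by omega)) fun j _ hj => ?_)
  · rw [Nat.choose_symm (mem_range_succ_iff.1 hj)]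
  · rw [Nat.choose_eq_zero_of_lt (n := n) (by simpa using hj), mul_zero]

theorem sum_range_neg_one_pow_mul_choose_mul_add_choose (m j c : ℕ) :
    ∑ i ∈ range (m + 1), (-1 : ℤ) ^ (m - i) * m.choose i * (c + i).choose (m + j) =
      c.choose j := by
  have h := congr_fun (fwdDiff_iter_choose j m) c
  rw [fwdDiff_iter_eq_sum_shift] at h
  simpa only [smul_eq_mul, mul_one] using h

theorem sum_range_neg_one_pow_mul_choose_mul_choose_mul_add_choose (n j : ℕ) (hj : j ≤ n) :
    ∑ k ∈ range (n + 1), (-1 : ℤ) ^ (n + k) * n.choose k * k.choose j * (n + k).choose k =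
      n.choose j * (n + j).choose j := by
  obtain ⟨m, rfl⟩ := Nat.exists_eq_add_of_le hj
  rw [show j + m + 1 = j + (m + 1) by ring, sum_range_add,
    sum_eq_zero fun k hk => by simp [Nat.choose_eq_zero_of_lt (mem_range.1 hk)], zero_add,
    ← sum_range_neg_one_pow_mul_choose_mul_add_choose m j (j + m + j), mul_sum]
  refine sum_congr rfl fun i hi => ?_
  have hi : i ≤ m := mem_range_succ_iff.1 hi
  have hsign : (-1 : ℤ) ^ (j + m + (j + i)) = (-1) ^ (m - i) := by
    rw [show j + m + (j + i) = m - i + 2 * (j + i) by omega, pow_add, pow_mul]; simp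
  have hchoose : (j + m).choose (j + i) * (j + i).choose j = (j + m).choose j * m.choose i := by
    simpa using Nat.choose_mul (n := j + m) (Nat.le_add_right j i)
  have hsymm : (j + m + (j + i)).choose (j + i) = (j + m + j + i).choose (m + j) := by
    rw [show j + m + j + i = (j + i) + (m + j) by ring, ← Nat.choose_symm_add]; ring_nf
  rw [hsign, hsymm, mul_assoc _ _ ((j + i).choose j : ℤ), ← Nat.cast_mul, hchoose]
  push_cast; ring

/-- The curious identity `∑_{k=0}^n C(n,k)² C(n+k,k) = ∑_{k=0}^n (-1)^{n+k} C(n,k) C(n+k,k)²`. -/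
theorem stmt10 (n : ℕ) :
    ∑ k ∈ Finset.range (n + 1), (n.choose k : ℤ) ^ 2 * ((n + k).choose k : ℤ) =
      ∑ k ∈ Finset.range (n + 1),
        (-1 : ℤ) ^ (n + k) * (n.choose k : ℤ) * ((n + k).choose k : ℤ) ^ 2 := by
  calc ∑ k ∈ range (n + 1), (n.choose k : ℤ) ^ 2 * ((n + k).choose k : ℤ)
      = ∑ j ∈ range (n + 1), ∑ k ∈ range (n + 1), (n.choose j : ℤ) *
          ((-1) ^ (n + k) * n.choose k * k.choose j * (n + k).choose k) := by
        refine sum_congr rfl fun j hj => ?_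
        rw [← mul_sum, sum_range_neg_one_pow_mul_choose_mul_choose_mul_add_choose n j
          (mem_range_succ_iff.1 hj)]
        ring
    _ = ∑ k ∈ range (n + 1),
          (-1 : ℤ) ^ (n + k) * n.choose k * (n + k).choose k * (n + k).choose k := by
        rw [sum_comm]
        refine sum_congr rfl fun k hk => ?_
        rw [Nat.add_choose_eq_sum_range_choose_mul_choose n k n (mem_range_succ_iff.1 hk),
          Nat.cast_sum, mul_sum]
        refine sum_congr rfl fun j _ => ?_
        push_cast; ring
    _ = _ := by simp only [sq, mul_assoc]
end

section
/- For d ≥ 2 and n = (n1, …, nd) ∈ ℕ^d define Y_d(n) = Σ_{k=0}^{min(n1, …, nd)} C(n1, k)·C(n2, k)···C(nd, k), where C denotes the usual binomial coefficient. Then for every prime p ≥ 5 and every integer r ≥ 1, Y_d(p^r·n) ≡ Y_d(p^{r-1}·n) (mod p^{3r}). -/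
open Finset

/-- `Y_d(n) = ∑_{k=0}^{min nᵢ} ∏ᵢ C(nᵢ,k)`, as an integer. -/
noncomputable def Y (d : ℕ) (n : Fin d → ℕ) : ℤ :=
  ∑ k ∈ Finset.range ((⨅ i, n i) + 1), ∏ i : Fin d, ((n i).choose k : ℤ)

/-!
For `d = 2`, Vandermonde gives `Y₂(n) = C(n₁ + n₂, n₁)`, and the claim is a case of the
Jacobsthal–Kazandzidis congruence `C(p(b+c), pb) ≡ C(b+c, b) (mod p^(3+α+2m))` for
`p^α ∣ b + c` and `p^m ∣ b, c`. Splitting the falling factorials `(p(b+c))_(pb)` and `(pb)!` into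
the factors divisible by `p` and the rest gives `C(p(b+c), pb) · F = C(b+c, b) · B`, where
`F = ∏ (pb - i)` and `B = ∏ (p(b+c) - i)` over the `i < pb` prime to `p`. Pairing `i` with
`pb - i` gives `F² = ∏ uᵢ` and `B² = ∏ (uᵢ + K)` with `uᵢ = i(pb - i)` and `K = p²(b+c)c`.
Modulo `p^(m+1)` we have `uᵢ ≡ -i²`, and the `i` run through whole reduced residue systems, so
the linear term `K ∑ᵢ ∏_{j ≠ i} uⱼ = K (∏ uⱼ) ∑ 1/uᵢ` vanishes because `∑ 1/i² ≡ 0` for `p ≥ 5`.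
Hence `B² ≡ F² (mod p^(3+α+2m))`, which transfers to the binomial coefficients because
`B ≡ F ≢ 0 (mod p)`.

For `d ≥ 3`, split the sum for `p^r n` according to whether `p ∣ k`. If `p ∤ k`, each of the
`d ≥ 3` factors `C(p^r nᵢ, k)` is divisible by `p^r`. If `k = pk'`, compare
`∏ C(p^r nᵢ, pk')` with `∏ C(p^(r-1) nᵢ, k')` one factor at a time: each difference is divisible
by `p^(3+(r-1)+2u)` with `u = min(v_p(k'), r-1)`, and by Kummer all factors are divisible by
`p^(r-1-u)`. Telescoping then gives `p^(3r)`.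
-/

def notDvdRange (p N : ℕ) : Finset ℕ := (range N).filter (fun i => ¬ p ∣ i)

section NotDvdRange

variable {p N : ℕ}

lemma mem_notDvdRange {i : ℕ} : i ∈ notDvdRange p N ↔ i < N ∧ ¬ p ∣ i := by
  simp [notDvdRange]

lemma sub_mem_notDvdRange (hN : p ∣ N) {i : ℕ} (hi : i ∈ notDvdRange p N) :
    N - i ∈ notDvdRange p N := by
  obtain ⟨hiN, hpi⟩ := mem_notDvdRange.1 hi
  have hi0 : i ≠ 0 := by rintro rfl; exact hpi (dvd_zero p)
  refine mem_notDvdRange.2 ⟨by omega, fun h => hpi ?_⟩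
  simpa [Nat.sub_sub_self hiN.le] using Nat.dvd_sub hN h

lemma prod_notDvdRange_sub {M : Type*} [CommMonoid M] (hN : p ∣ N) (g : ℕ → M) :
    ∏ i ∈ notDvdRange p N, g (N - i) = ∏ i ∈ notDvdRange p N, g i := by
  refine prod_nbij' (N - ·) (N - ·) (fun i hi => sub_mem_notDvdRange hN hi)
    (fun i hi => sub_mem_notDvdRange hN hi) (fun i hi => ?_) (fun i hi => ?_) (fun _ _ => rfl)
  all_goals exact Nat.sub_sub_self (mem_notDvdRange.1 hi).1.le

@[to_additive sum_range_mul_eq_add_sum_notDvdRange]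
lemma prod_range_mul_eq_mul_prod_notDvdRange {M : Type*} [CommMonoid M] (hp : 0 < p) (b : ℕ)
    (g : ℕ → M) :
    ∏ i ∈ range (p * b), g i = (∏ j ∈ range b, g (p * j)) * ∏ i ∈ notDvdRange p (p * b), g i := by
  have hmultiples : (range (p * b)).filter (p ∣ ·) = (range b).image (p * ·) := by
    ext i
    simp only [mem_filter, mem_range, mem_image]
    constructor
    · rintro ⟨hi, j, rfl⟩
      exact ⟨j, Nat.lt_of_mul_lt_mul_left hi, rfl⟩
    · rintro ⟨j, hj, rfl⟩
      exact ⟨Nat.mul_lt_mul_of_pos_left hj hp, dvd_mul_right p j⟩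
  rw [← prod_filter_mul_prod_filter_not (range (p * b)) (p ∣ ·), hmultiples,
    prod_image fun x _ y _ h => Nat.eq_of_mul_eq_mul_left hp h]
  rfl

lemma descFactorial_mul_mul (hp : 0 < p) (a b : ℕ) :
    (p * a).descFactorial (p * b) =
      p ^ b * a.descFactorial b * ∏ i ∈ notDvdRange p (p * b), (p * a - i) := by
  rw [Nat.descFactorial_eq_prod_range, prod_range_mul_eq_mul_prod_notDvdRange hp,
    Nat.descFactorial_eq_prod_range]
  simp_rw [← Nat.mul_sub, prod_mul_distrib, prod_const, card_range]

lemma choose_mul_mul_prod_notDvdRange (hp : 0 < p) (b c : ℕ) :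
    (p * (b + c)).choose (p * b) * ∏ i ∈ notDvdRange p (p * b), (p * b - i) =
      (b + c).choose b * ∏ i ∈ notDvdRange p (p * b), (p * (b + c) - i) := by
  have hnum := descFactorial_mul_mul hp (b + c) b
  have hden := descFactorial_mul_mul hp b b
  rw [Nat.descFactorial_eq_factorial_mul_choose] at hnum
  rw [Nat.descFactorial_self, Nat.descFactorial_self] at hden
  rw [hden, Nat.descFactorial_eq_factorial_mul_choose] at hnum
  have hpos : p ^ b * b.factorial ≠ 0 := by positivity
  apply mul_left_cancel₀ hpos
  linear_combination hnum

end NotDvdRange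

lemma sum_inverse_mul_sq_eq_zero {R : Type*} [CommRing R] [Fintype R] (h2 : IsUnit (2 : R))
    (h3 : IsUnit (3 : R)) (c : R) : ∑ x : R, Ring.inverse (c * x ^ 2) = 0 := by
  set S := ∑ x : R, Ring.inverse (c * x ^ 2)
  have h4 : IsUnit (4 : R) := by simpa [show (4 : R) = 2 * 2 by norm_num] using h2.mul h2
  -- substituting `x ↦ 2 x` multiplies `S` by the inverse of `4`
  have hS : S = Ring.inverse 4 * S := by
    calc S = ∑ x : R, Ring.inverse (c * (h2.unit * x) ^ 2) :=
          (Fintype.sum_equiv (Units.mulLeft h2.unit) _ _ fun _ => rfl).symm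
      _ = Ring.inverse 4 * S := by
          rw [mul_sum]
          refine sum_congr rfl fun x _ => ?_
          rw [mul_pow, IsUnit.unit_spec, mul_left_comm, Ring.mul_inverse_rev, mul_comm]
          norm_num
  have h4S : 4 * S = S := by
    conv_lhs => rw [hS]
    rw [← mul_assoc, Ring.mul_inverse_cancel _ h4, one_mul]
  have h3S : 3 * S = 0 := by linear_combination h4S
  exact h3.mul_right_eq_zero.1 h3S

lemma sum_range_mul_natCast_eq_nsmul_sum {M : Type*} [AddCommMonoid M] (q t : ℕ) [NeZero q]
    (f : ZMod q → M) : ∑ i ∈ range (q * t), f i = t • ∑ x, f x := by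
  induction t with
  | zero => simp
  | succ t ih =>
    rw [Nat.mul_succ, sum_range_add, ih, succ_nsmul]
    congr 1
    simp only [Nat.cast_add, Nat.cast_mul, ZMod.natCast_self, zero_mul, zero_add]
    exact sum_nbij' (fun i => (i : ZMod q)) ZMod.val (fun _ _ => mem_univ _)
      (fun x _ => mem_range.2 x.val_lt) (fun i hi => ZMod.val_cast_of_lt (mem_range.1 hi))
      (fun x _ => ZMod.natCast_zmod_val x) (fun _ _ => rfl)

lemma sum_prod_erase_eq_prod_mul_sum_inverse {ι R : Type*} [CommSemiring R] [DecidableEq ι]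
    (s : Finset ι) (v : ι → R) (hv : ∀ i ∈ s, IsUnit (v i)) :
    ∑ i ∈ s, ∏ j ∈ s.erase i, v j = (∏ j ∈ s, v j) * ∑ i ∈ s, Ring.inverse (v i) := by
  rw [mul_sum]
  refine sum_congr rfl fun i hi => ?_
  rw [← prod_erase_mul s v hi, mul_assoc, Ring.mul_inverse_cancel _ (hv i hi), mul_one]

lemma isUnit_natCast_zmod_pow_iff {p : ℕ} (hp : p.Prime) (m i : ℕ) :
    IsUnit (i : ZMod (p ^ (m + 1))) ↔ ¬ p ∣ i := by
  rw [ZMod.isUnit_iff_coprime, Nat.coprime_pow_right_iff m.succ_pos, Nat.coprime_comm,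
    hp.coprime_iff_not_dvd]

lemma pow_succ_dvd_sum_prod_erase {p m b : ℕ} (hp : p.Prime) (hp5 : 5 ≤ p) (hb : p ^ m ∣ b) :
    (p : ℤ) ^ (m + 1) ∣ ∑ i ∈ notDvdRange p (p * b),
      ∏ j ∈ (notDvdRange p (p * b)).erase i, ((j : ℤ) * ((p * b - j : ℕ) : ℤ)) := by
  set q := p ^ (m + 1)
  have : NeZero q := ⟨pow_ne_zero _ hp.ne_zero⟩
  obtain ⟨t, rfl⟩ := hb
  have hq : p * (p ^ m * t) = q * t := by ring
  have hunit : ∀ i : ℕ, IsUnit (i : ZMod q) ↔ ¬ p ∣ i := isUnit_natCast_zmod_pow_iff hp m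
  have hfactor : ∀ j ∈ notDvdRange p (p * (p ^ m * t)),
      (((j : ℤ) * ((p * (p ^ m * t) - j : ℕ) : ℤ) : ℤ) : ZMod q) = -1 * (j : ZMod q) ^ 2 := by
    intro j hj
    rw [Int.cast_mul, Int.cast_natCast, Int.cast_natCast,
      Nat.cast_sub (mem_notDvdRange.1 hj).1.le, hq, Nat.cast_mul, ZMod.natCast_self]
    ring
  have hinv : ∑ i ∈ notDvdRange p (p * (p ^ m * t)), Ring.inverse (-1 * (i : ZMod q) ^ 2) = 0 := by
    have hsmall : ∀ k : ℕ, k < p → k ≠ 0 → IsUnit (k : ZMod q) := fun k hk hk0 =>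
      (hunit k).2 fun h => absurd (Nat.le_of_dvd (Nat.pos_of_ne_zero hk0) h) (by omega)
    have hnonunit : ∀ i : ℕ, p ∣ i → Ring.inverse (-1 * (i : ZMod q) ^ 2) = 0 := fun i hpi =>
      Ring.inverse_non_unit _ fun h =>
        (hunit i).1 ((isUnit_pow_iff two_ne_zero).1 (isUnit_of_mul_isUnit_right h)) hpi
    rw [notDvdRange, sum_filter_of_ne fun i _ hi => mt (hnonunit i) hi, hq,
      sum_range_mul_natCast_eq_nsmul_sum q t fun x => Ring.inverse (-1 * x ^ 2),
      sum_inverse_mul_sq_eq_zero (by exact_mod_cast hsmall 2 (by omega) two_ne_zero)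
        (by exact_mod_cast hsmall 3 (by omega) three_ne_zero), smul_zero]
  rw [← Nat.cast_pow, ← ZMod.intCast_zmod_eq_zero_iff_dvd, Int.cast_sum]
  simp_rw [Int.cast_prod]
  rw [sum_congr rfl fun i _ => prod_congr rfl fun j hj => hfactor j (mem_of_mem_erase hj),
    sum_prod_erase_eq_prod_mul_sum_inverse _ _ fun j hj =>
      isUnit_neg_one.mul (((hunit j).2 (mem_notDvdRange.1 hj).2).pow 2),
    hinv, mul_zero]

lemma sq_dvd_prod_add_sub_prod_sub_mul_sum_prod_erase {ι R : Type*} [CommRing R] [DecidableEq ι]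
    (s : Finset ι) (u : ι → R) (K : R) :
    K ^ 2 ∣ ∏ i ∈ s, (u i + K) - ∏ i ∈ s, u i - K * ∑ i ∈ s, ∏ j ∈ s.erase i, u j := by
  induction s using Finset.induction_on with
  | empty => simp
  | insert a s ha ih =>
    obtain ⟨z, hz⟩ := ih
    have herase : ∑ i ∈ insert a s, ∏ j ∈ (insert a s).erase i, u j =
        ∏ j ∈ s, u j + u a * ∑ i ∈ s, ∏ j ∈ s.erase i, u j := by
      rw [sum_insert ha, erase_insert ha, mul_sum]
      congr 1
      refine sum_congr rfl fun i hi => ?_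
      rw [erase_insert_of_ne (ne_of_mem_of_not_mem hi ha).symm,
        prod_insert fun h => ha (mem_of_mem_erase h)]
    refine ⟨u a * z + ∑ i ∈ s, ∏ j ∈ s.erase i, u j + K * z, ?_⟩
    rw [prod_insert ha, prod_insert ha, herase]
    linear_combination (u a + K) * hz

lemma pow_dvd_prod_sub_prod {ι R : Type*} [CommRing R] {s : Finset ι} (hs : s.Nonempty)
    {f g : ι → R} {π : R} {w E : ℕ} (hf : ∀ i ∈ s, π ^ w ∣ f i) (hg : ∀ i ∈ s, π ^ w ∣ g i)
    (hfg : ∀ i ∈ s, π ^ E ∣ f i - g i) :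
    π ^ (E + w * (#s - 1)) ∣ ∏ i ∈ s, f i - ∏ i ∈ s, g i := by
  induction hs using Finset.Nonempty.cons_induction with
  | singleton a => simpa using hfg a (mem_singleton_self a)
  | cons a s ha hs ih =>
    simp only [forall_mem_cons] at hf hg hfg
    rw [prod_cons, prod_cons, card_cons, Nat.add_sub_cancel,
      show f a * ∏ i ∈ s, f i - g a * ∏ i ∈ s, g i =
        (f a - g a) * ∏ i ∈ s, f i + g a * (∏ i ∈ s, f i - ∏ i ∈ s, g i) by ring]
    have hprod : π ^ (w * #s) ∣ ∏ i ∈ s, f i := by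
      simpa [pow_mul] using prod_dvd_prod_of_dvd _ _ hf.2
    have hexp : E + w * #s = w + (E + w * (#s - 1)) := by
      obtain ⟨k, hk⟩ : ∃ k, #s = k + 1 := ⟨#s - 1, by have := hs.card_pos; omega⟩
      rw [hk, Nat.add_sub_cancel]
      ring
    refine dvd_add (pow_add π E _ ▸ mul_dvd_mul hfg.1 hprod) ?_
    rw [hexp, pow_add]
    exact mul_dvd_mul hg.1 (ih hf.2 hg.2 hfg.2)

section Descent

variable {R : Type*} [CommRing R] [IsDomain R] {p A C F B : R} {E : ℕ}

lemma pow_dvd_sub_of_mul_eq_mul_of_not_dvd (hp : Prime p) (hp2 : ¬ p ∣ 2)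
    (hAF : A * F = C * B) (hF : ¬ p ∣ F) (hBF : p ∣ B - F) (hsq : p ^ E ∣ B ^ 2 - F ^ 2)
    (hC : ¬ p ∣ C) : p ^ E ∣ A - C := by
  have hdiff : p ∣ A - C := by
    have : p ∣ (A - C) * F := by
      rw [show (A - C) * F = C * (B - F) by linear_combination hAF]
      exact dvd_mul_of_dvd_right hBF C
    exact (hp.dvd_or_dvd this).resolve_right hF
  have hsum : ¬ p ∣ A + C := fun h => by
    have : p ∣ 2 * C := by
      rw [show 2 * C = A + C - (A - C) by ring]
      exact dvd_sub h hdiff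
    exact (hp.dvd_or_dvd this).elim hp2 hC
  have hprod : p ^ E ∣ (A - C) * (A + C) * F ^ 2 := by
    rw [show (A - C) * (A + C) * F ^ 2 = C ^ 2 * (B ^ 2 - F ^ 2) by
      linear_combination (A * F + C * B) * hAF]
    exact dvd_mul_of_dvd_right hsq _
  exact hp.pow_dvd_of_dvd_mul_right _ hsum
    (hp.pow_dvd_of_dvd_mul_right _ (fun h => hF (hp.dvd_of_dvd_pow h)) hprod)

-- Dividing `A` and `C` by the power of `p` in `C` reduces this to the case `p ∤ C`.
lemma pow_dvd_sub_of_mul_eq_mul [WfDvdMonoid R] (hp : Prime p) (hp2 : ¬ p ∣ 2)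
    (hAF : A * F = C * B) (hF : ¬ p ∣ F) (hBF : p ∣ B - F) (hsq : p ^ E ∣ B ^ 2 - F ^ 2) :
    p ^ E ∣ A - C := by
  by_cases hC0 : C = 0
  · have hF0 : F ≠ 0 := fun h => hF (h ▸ dvd_zero p)
    simp [hC0, hF0] at hAF
    simp [hAF, hC0]
  obtain ⟨δ, Y, hY, rfl⟩ := WfDvdMonoid.max_power_factor hC0 hp.irreducible
  obtain ⟨X, rfl⟩ : p ^ δ ∣ A :=
    hp.pow_dvd_of_dvd_mul_right δ hF ⟨Y * B, by rw [hAF]; ring⟩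
  have hXY : X * F = Y * B :=
    mul_left_cancel₀ (pow_ne_zero δ hp.ne_zero) (by linear_combination hAF)
  rw [← mul_sub]
  exact dvd_mul_of_dvd_right (pow_dvd_sub_of_mul_eq_mul_of_not_dvd hp hp2 hXY hF hBF hsq hY) _

end Descent

lemma Nat.dvd_choose_mul_self (N k : ℕ) : N ∣ N.choose k * k := by
  rcases N with _ | N
  · rcases k with _ | k <;> simp
  rcases k with _ | k
  · simp
  exact ⟨N.choose k, (Nat.add_one_mul_choose_eq N k).symm⟩

lemma Nat.Prime.pow_sub_dvd_choose_pow_mul {p : ℕ} (hp : p.Prime) (r n u : ℕ) {t : ℕ}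
    (ht : ¬ p ∣ t) : p ^ (r - u) ∣ (p ^ r * n).choose (p ^ u * t) := by
  rcases le_or_gt u r with hur | hur
  · have h : p ^ u * p ^ (r - u) ∣ p ^ u * ((p ^ r * n).choose (p ^ u * t) * t) := by
      rw [← pow_add, Nat.add_sub_cancel' hur,
        show p ^ u * ((p ^ r * n).choose (p ^ u * t) * t) =
          (p ^ r * n).choose (p ^ u * t) * (p ^ u * t) by ring]
      exact (dvd_mul_right _ n).trans (Nat.dvd_choose_mul_self _ _)
    exact (Nat.Coprime.pow_left _ (hp.coprime_iff_not_dvd.2 ht)).dvd_of_dvd_mul_right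
      (Nat.dvd_of_mul_dvd_mul_left (pow_pos hp.pos u) h)
  · simp [Nat.sub_eq_zero_of_le hur.le]

theorem pow_dvd_choose_mul_add_sub_choose_add {p α m b c : ℕ} (hp : p.Prime) (hp5 : 5 ≤ p)
    (hbc : p ^ α ∣ b + c) (hb : p ^ m ∣ b) (hc : p ^ m ∣ c) :
    (p : ℤ) ^ (3 + α + 2 * m) ∣ ((p * (b + c)).choose (p * b) : ℤ) - ((b + c).choose b : ℤ) := by
  set U := notDvdRange p (p * b)
  set F : ℤ := ∏ i ∈ U, ((p * b - i : ℕ) : ℤ)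
  set B : ℤ := ∏ i ∈ U, ((p * (b + c) - i : ℕ) : ℤ)
  set u : ℕ → ℤ := fun i => (i : ℤ) * ((p * b - i : ℕ) : ℤ)
  set K : ℤ := (p : ℤ) ^ 2 * (b + c) * c
  have hpZ : Prime (p : ℤ) := Nat.prime_iff_prime_int.mp hp
  have hpb : p ∣ p * b := dvd_mul_right p b
  have hle : ∀ i ∈ U, i ≤ p * b := fun i hi => (mem_notDvdRange.1 hi).1.le
  have hbc' : p * b ≤ p * (b + c) := Nat.mul_le_mul_left p (Nat.le_add_right b c)
  have hkey : ((p * (b + c)).choose (p * b) : ℤ) * F = ((b + c).choose b : ℤ) * B := by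
    simpa only [Nat.cast_mul, Nat.cast_prod] using
      congrArg (Nat.cast : ℕ → ℤ) (choose_mul_mul_prod_notDvdRange hp.pos b c)
  have hF : ¬ (p : ℤ) ∣ F := by
    rw [hpZ.dvd_finsetProd_iff]
    rintro ⟨i, hi, h⟩
    exact (mem_notDvdRange.1 (sub_mem_notDvdRange hpb hi)).2 (Int.natCast_dvd_natCast.1 h)
  have hBF : (p : ℤ) ∣ B - F := (Int.ModEq.prod fun i hi => Int.modEq_iff_dvd.2
    ⟨c, by push_cast [Nat.cast_sub (hle i hi), Nat.cast_sub ((hle i hi).trans hbc')]; ring⟩).dvd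
  have hF2 : F ^ 2 = ∏ i ∈ U, u i := by
    rw [sq]
    nth_rewrite 1 [show F = ∏ i ∈ U, (i : ℤ) from prod_notDvdRange_sub hpb fun j => (j : ℤ)]
    exact (prod_mul_distrib ..).symm
  have hB2 : B ^ 2 = ∏ i ∈ U, (u i + K) := by
    have hB : B = ∏ i ∈ U, ((p * (b + c) - (p * b - i) : ℕ) : ℤ) :=
      (prod_notDvdRange_sub hpb fun j => ((p * (b + c) - j : ℕ) : ℤ)).symm
    rw [sq]
    nth_rewrite 2 [hB]
    refine (prod_mul_distrib ..).symm.trans (prod_congr rfl fun i hi => ?_)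
    have hi' : p * b - i ≤ p * (b + c) := (Nat.sub_le _ _).trans hbc'
    push_cast [u, K, Nat.cast_sub (hle i hi), Nat.cast_sub hi',
      Nat.cast_sub ((hle i hi).trans hbc')]
    ring
  have hK : (p : ℤ) ^ (2 + α + m) ∣ K := by
    rw [pow_add, pow_add]
    exact mul_dvd_mul (mul_dvd_mul_left _ (by exact_mod_cast hbc)) (by exact_mod_cast hc)
  have hsq : (p : ℤ) ^ (3 + α + 2 * m) ∣ B ^ 2 - F ^ 2 := by
    rw [hB2, hF2, ← sub_add_cancel (∏ i ∈ U, (u i + K) - ∏ i ∈ U, u i)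
      (K * ∑ i ∈ U, ∏ j ∈ U.erase i, u j)]
    refine dvd_add ?_ ?_
    · refine (pow_dvd_pow _ (by omega)).trans ((pow_mul (p : ℤ) (2 + α + m) 2 ▸
        pow_dvd_pow_of_dvd hK 2).trans (sq_dvd_prod_add_sub_prod_sub_mul_sum_prod_erase U u K))
    · rw [show 3 + α + 2 * m = (2 + α + m) + (m + 1) by ring, pow_add]
      exact mul_dvd_mul hK (pow_succ_dvd_sum_prod_erase hp hp5 hb)
  have hp2 : ¬ (p : ℤ) ∣ 2 := fun h => by
    have := Nat.le_of_dvd two_pos (Int.natCast_dvd_natCast.1 h)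
    omega
  exact pow_dvd_sub_of_mul_eq_mul hpZ hp2 hkey hF hBF hsq

theorem pow_dvd_choose_mul_sub_choose {p α m a b : ℕ} (hp : p.Prime) (hp5 : 5 ≤ p)
    (ha : p ^ α ∣ a) (hb : p ^ m ∣ b) (hmα : m ≤ α) :
    (p : ℤ) ^ (3 + α + 2 * m) ∣ ((p * a).choose (p * b) : ℤ) - (a.choose b : ℤ) := by
  rcases le_or_gt b a with hba | hab
  · obtain ⟨c, rfl⟩ := Nat.exists_eq_add_of_le hba
    exact pow_dvd_choose_mul_add_sub_choose_add hp hp5 ha hb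
      ((Nat.dvd_add_right hb).1 ((pow_dvd_pow p hmα).trans ha))
  · rw [Nat.choose_eq_zero_of_lt hab,
      Nat.choose_eq_zero_of_lt (Nat.mul_lt_mul_of_pos_left hab hp.pos)]
    simp

theorem pow_dvd_prod_choose_mul_sub_prod_choose {p : ℕ} (hp : p.Prime) (hp5 : 5 ≤ p)
    {ι : Type*} [Fintype ι] (hι : 3 ≤ Fintype.card ι) (n : ι → ℕ) (r k : ℕ) :
    (p : ℤ) ^ (3 * (r + 1)) ∣ ∏ i, ((p ^ (r + 1) * n i).choose (p * k) : ℤ) -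
      ∏ i, ((p ^ r * n i).choose k : ℤ) := by
  rcases Nat.eq_zero_or_pos k with rfl | hk
  · simp
  have : Nonempty ι := Fintype.card_pos_iff.1 (by omega)
  obtain ⟨u, t, ht, rfl⟩ := Nat.exists_eq_pow_mul_and_not_dvd hk.ne' p hp.ne_one
  have hf : ∀ i, (p : ℤ) ^ (r - u) ∣ ((p ^ (r + 1) * n i).choose (p * (p ^ u * t)) : ℤ) :=
    fun i => by
      have := hp.pow_sub_dvd_choose_pow_mul (r + 1) (n i) (u + 1) ht
      rw [Nat.add_sub_add_right, pow_succ' p u, mul_assoc] at this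
      exact_mod_cast Int.natCast_dvd_natCast.2 this
  have hg : ∀ i, (p : ℤ) ^ (r - u) ∣ ((p ^ r * n i).choose (p ^ u * t) : ℤ) := fun i => by
    exact_mod_cast Int.natCast_dvd_natCast.2 (hp.pow_sub_dvd_choose_pow_mul r (n i) u ht)
  have hfg : ∀ i, (p : ℤ) ^ (3 + r + 2 * min u r) ∣
      ((p ^ (r + 1) * n i).choose (p * (p ^ u * t)) : ℤ) - ((p ^ r * n i).choose (p ^ u * t) : ℤ) :=
    fun i => by
      have := pow_dvd_choose_mul_sub_choose hp hp5 (dvd_mul_right (p ^ r) (n i))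
        ((pow_dvd_pow p (min_le_left u r)).mul_right t) (min_le_right u r)
      rwa [← mul_assoc, ← pow_succ'] at this
  have hdvd := pow_dvd_prod_sub_prod univ_nonempty (fun i _ => hf i) (fun i _ => hg i)
    (fun i _ => hfg i)
  rw [card_univ] at hdvd
  refine (pow_dvd_pow _ ?_).trans hdvd
  have := Nat.mul_le_mul_left (r - u) (show 2 ≤ Fintype.card ι - 1 by omega)
  omega

lemma Y_eq_sum_range {d : ℕ} [NeZero d] (n : Fin d → ℕ) {N : ℕ} (hN : ⨅ i, n i < N) :
    Y d n = ∑ k ∈ range N, ∏ i, ((n i).choose k : ℤ) := by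
  refine sum_subset (range_subset_range.2 hN) fun k _ hk => ?_
  obtain ⟨i, hi⟩ := exists_lt_of_ciInf_lt (Nat.lt_of_succ_le (not_lt.1 (mem_range.not.1 hk)))
  exact prod_eq_zero (mem_univ i) (by rw [Nat.choose_eq_zero_of_lt hi, Nat.cast_zero])

lemma iInf_lt_apply_add_one {d : ℕ} (n : Fin d → ℕ) (i : Fin d) : ⨅ j, n j < n i + 1 :=
  Nat.lt_succ_of_le (ciInf_le (OrderBot.bddBelow _) i)

lemma Y_two (m : Fin 2 → ℕ) : Y 2 m = ((m 0 + m 1).choose (m 0) : ℤ) := by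
  rw [Y_eq_sum_range m (iInf_lt_apply_add_one m 0), Nat.add_choose_eq,
    ← Finset.Nat.sum_antidiagonal_swap, Finset.Nat.sum_antidiagonal_eq_sum_range_succ_mk]
  push_cast
  refine sum_congr rfl fun k hk => ?_
  rw [Fin.prod_univ_two, Prod.swap_prod_mk, Nat.choose_symm (Nat.lt_succ_iff.1 (mem_range.1 hk))]

theorem pow_dvd_Y_pow_succ_mul_sub_Y_pow_mul {d p : ℕ} (hd : 3 ≤ d) (hp : p.Prime) (hp5 : 5 ≤ p)
    (n : Fin d → ℕ) (r : ℕ) :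
    (p : ℤ) ^ (3 * (r + 1)) ∣ Y d (fun i => p ^ (r + 1) * n i) - Y d (fun i => p ^ r * n i) := by
  have : NeZero d := ⟨by omega⟩
  have hN : ⨅ i, p ^ (r + 1) * n i < p * (p ^ r * n 0 + 1) :=
    (iInf_lt_apply_add_one _ 0).trans_le (by rw [pow_succ', mul_assoc, Nat.mul_succ]; omega)
  rw [Y_eq_sum_range _ hN, Y_eq_sum_range _ (iInf_lt_apply_add_one _ 0),
    sum_range_mul_eq_add_sum_notDvdRange hp.pos, add_sub_right_comm, ← sum_sub_distrib]
  refine dvd_add (dvd_sum fun k _ => ?_) (dvd_sum fun k hk => ?_)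
  · exact pow_dvd_prod_choose_mul_sub_prod_choose hp hp5 (by simpa using hd) n r k
  · have hdvd : ∀ i, (p : ℤ) ^ (r + 1) ∣ ((p ^ (r + 1) * n i).choose k : ℤ) := fun i => by
      simpa using Int.natCast_dvd_natCast.2
        (hp.pow_sub_dvd_choose_pow_mul (r + 1) (n i) 0 (mem_notDvdRange.1 hk).2)
    have hprod := prod_dvd_prod_of_dvd (s := univ) _ _ fun i _ => hdvd i
    rw [prod_const, card_univ, Fintype.card_fin, ← pow_mul] at hprod
    exact (pow_dvd_pow _ (by nlinarith)).trans hprod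

/-- For `d ≥ 2`, primes `p ≥ 5` and `r ≥ 1`, the supercongruence
`Y_d(pʳ·n) ≡ Y_d(p^{r-1}·n) (mod p^{3r})` holds. -/
theorem stmt13 (d : ℕ) (hd : 2 ≤ d) (n : Fin d → ℕ) (p : ℕ) (hp : p.Prime) (hp5 : 5 ≤ p)
    (r : ℕ) (hr : 1 ≤ r) :
    (p : ℤ) ^ (3 * r) ∣ Y d (fun i => p ^ r * n i) - Y d (fun i => p ^ (r - 1) * n i) := by
  obtain ⟨r, rfl⟩ : ∃ s, r = s + 1 := ⟨r - 1, by omega⟩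
  rw [Nat.add_sub_cancel]
  rcases hd.eq_or_lt with rfl | hd3
  · rw [Y_two, Y_two, show 3 * (r + 1) = 3 + r + 2 * r by ring,
      show p ^ (r + 1) * n 0 + p ^ (r + 1) * n 1 = p * (p ^ r * n 0 + p ^ r * n 1) by ring,
      show p ^ (r + 1) * n 0 = p * (p ^ r * n 0) by ring]
    exact pow_dvd_choose_mul_add_sub_choose_add hp hp5
      (dvd_add (dvd_mul_right _ _) (dvd_mul_right _ _)) (dvd_mul_right _ _) (dvd_mul_right _ _)
  · exact pow_dvd_Y_pow_succ_mul_sub_Y_pow_mul hd3 hp hp5 n r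
end

section
/- Let p ≥ 5 be a prime, let ε ∈ {-1, 1}, and let r ≥ 0 be an integer. Then in the ring ZMod(p^r), the sum Σ_{k=1, p ∤ k}^{p^r - 1} ε^k · ((k : ZMod(p^r))⁻¹)² equals 0; equivalently, Σ_{k=1, p ∤ k}^{p^r - 1} ε^k / k² ≡ 0 (mod p^r). -/
/-!
Reindex the sum by the units `u` of `ZMod (p ^ r)`, where `k = u.val`.

For `ε = 1`, inversion permutes the units, so the sum is `S = ∑ u ^ 2`; multiplying by the
unit `2` also permutes them, so `4 S = S`, and `S = 0` because `3` is a unit.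

For `ε = -1`, since `p ^ r` is odd, `k ↦ p ^ r - k` changes the parity of `k`, so `u ↦ -u`
changes the sign of every term; hence `2 S = 0`, and `S = 0` because `2` is a unit.
-/

open Finset

theorem ZMod.sum_range_filter_coprime_eq_sum_units {M : Type*} [AddCommMonoid M] (n : ℕ)
    [NeZero n] (f : ℕ → M) :
    ∑ k ∈ (range n).filter n.Coprime, f k = ∑ u : (ZMod n)ˣ, f (u : ZMod n).val := by
  symm
  refine sum_bij (fun u _ => (u : ZMod n).val) (fun u _ => ?_) (fun u _ v _ h => ?_)
    (fun k hk => ?_) (fun _ _ => rfl)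
  · exact mem_filter.mpr ⟨mem_range.mpr (ZMod.val_lt _), (ZMod.val_coe_unit_coprime u).symm⟩
  · exact Units.ext (ZMod.val_injective n h)
  · obtain ⟨hkn, hcop⟩ := mem_filter.mp hk
    refine ⟨ZMod.unitOfCoprime k hcop.symm, mem_univ _, ?_⟩
    simp [ZMod.val_cast_of_lt (mem_range.mp hkn)]

theorem sum_units_pow_eq_zero {R : Type*} [CommRing R] [Fintype Rˣ] (a : Rˣ) (m : ℕ)
    (ha : IsUnit ((a : R) ^ m - 1)) : ∑ u : Rˣ, (u : R) ^ m = 0 := by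
  have hfix : (a : R) ^ m * ∑ u : Rˣ, (u : R) ^ m = ∑ u : Rˣ, (u : R) ^ m := by
    simp only [mul_sum, ← mul_pow, ← Units.val_mul]
    exact Equiv.sum_comp (Equiv.mulLeft a) fun u => (u : R) ^ m
  refine ha.mul_right_eq_zero.mp ?_
  rw [sub_mul, one_mul, hfix, sub_self]

theorem Function.Odd.sum_eq_zero_of_isUnit_two {α R : Type*} [Fintype α] [InvolutiveNeg α]
    [Ring R] (h2 : IsUnit (2 : R)) {f : α → R} (hf : f.Odd) : ∑ a, f a = 0 := by
  have hneg : ∑ a, f a = -∑ a, f a :=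
    calc ∑ a, f a = ∑ a, f (-a) := (Equiv.sum_comp (Equiv.neg α) f).symm
      _ = ∑ a, -f a := sum_congr rfl fun a _ => hf a
      _ = -∑ a, f a := sum_neg_distrib _
  refine h2.mul_right_eq_zero.mp ?_
  rw [two_mul]
  nth_rewrite 1 [hneg]
  exact neg_add_cancel _

theorem ZMod.neg_one_pow_val_neg {R : Type*} [Ring R] {n : ℕ} [NeZero n] (hn : Odd n)
    {x : ZMod n} (hx : x ≠ 0) : (-1 : R) ^ (-x).val = -(-1) ^ x.val := by
  rw [ZMod.neg_val, if_neg hx]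
  rcases Nat.even_or_odd x.val with h | h
  · rw [(Nat.Odd.sub_even x.val_le hn h).neg_one_pow, h.neg_one_pow]
  · rw [(Nat.Odd.sub_odd hn h).neg_one_pow, h.neg_one_pow, neg_neg]

/-- For primes `p ≥ 5`, `ε ∈ {-1, 1}` and `r ≥ 0`, the sum `∑ ε^k/k²` over `1 ≤ k ≤ pʳ - 1`
with `p ∤ k` vanishes modulo `pʳ`, i.e. it equals `0` in `ZMod (pʳ)`. -/
theorem stmt15 (p : ℕ) (hp : p.Prime) (hp5 : 5 ≤ p) (ε : ℤ) (hε : ε = 1 ∨ ε = -1) (r : ℕ) :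
    ∑ k ∈ (Finset.range (p ^ r)).filter (fun k => ¬ p ∣ k),
      (ε : ZMod (p ^ r)) ^ k * ((k : ZMod (p ^ r))⁻¹) ^ 2 = 0 := by
  rcases r.eq_zero_or_pos with rfl | hr
  · rw [pow_zero]; exact Subsingleton.elim _ _
  have : Fact (1 < p ^ r) := ⟨Nat.one_lt_pow hr.ne' hp.one_lt⟩
  have hunit : ∀ q, q.Prime → q < p → IsUnit (q : ZMod (p ^ r)) := fun q hq hqp =>
    (ZMod.isUnit_iff_coprime q _).mpr (((Nat.coprime_primes hq hp).mpr hqp.ne).pow_right r)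
  have h2 : IsUnit (2 : ZMod (p ^ r)) := by exact_mod_cast hunit 2 Nat.prime_two (by omega)
  have h3 : IsUnit (3 : ZMod (p ^ r)) := by exact_mod_cast hunit 3 Nat.prime_three (by omega)
  have hfilter :
      (range (p ^ r)).filter (fun k => ¬ p ∣ k) = (range (p ^ r)).filter (p ^ r).Coprime :=
    filter_congr fun k _ => by rw [Nat.coprime_pow_left_iff hr, hp.coprime_iff_not_dvd]
  rw [hfilter, ZMod.sum_range_filter_coprime_eq_sum_units]
  simp only [ZMod.natCast_zmod_val, ZMod.inv_coe_unit]
  rcases hε with rfl | rfl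
  · simp only [Int.cast_one, one_pow, one_mul]
    exact (Equiv.sum_comp (Equiv.inv (ZMod (p ^ r))ˣ) fun u => (u : ZMod (p ^ r)) ^ 2).trans
      (sum_units_pow_eq_zero h2.unit 2 (by norm_num [h3]))
  · have hodd : Odd (p ^ r) := (hp.odd_of_ne_two (by omega)).pow
    refine Function.Odd.sum_eq_zero_of_isUnit_two h2 fun u => ?_
    simp only [Int.cast_neg, Int.cast_one, Units.val_neg, inv_neg, neg_sq]
    rw [ZMod.neg_one_pow_val_neg hodd u.ne_zero, neg_mul]
end

section
/- Let p be a prime, let m1, m2, k be integers, and let r ≥ 1 be an integer. Then binom(p^r·m1 + p^r·m2 - k - 1, p^r·m1) ≡ binom(p^{r-1}·m1 + p^{r-1}·m2 - ⌊k/p⌋ - 1, p^{r-1}·m1) (mod p^r), where ⌊k/p⌋ denotes the floor of k/p (floor division of integers). -/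
open Finset

theorem Int.sub_one_ediv_of_dvd {p y : ℤ} (hp : 0 < p) (h : p ∣ y) :
    (y - 1) / p = y / p - 1 := by
  obtain ⟨c, rfl⟩ := h
  rw [Int.ediv_eq_iff_of_pos hp, Int.mul_ediv_cancel_left _ hp.ne']
  constructor <;> nlinarith

theorem Int.sub_one_ediv_of_not_dvd {p y : ℤ} (hp : 0 < p) (h : ¬ p ∣ y) :
    (y - 1) / p = y / p := by
  have hy := Int.mul_ediv_add_emod y p
  have hpos : 0 < y % p :=
    lt_of_le_of_ne (Int.emod_nonneg y hp.ne') (Ne.symm fun h0 ↦ h (Int.dvd_of_emod_eq_zero h0))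
  have := Int.emod_lt_of_pos y hp
  rw [Int.ediv_eq_iff_of_pos hp]
  constructor <;> linarith

theorem Int.neg_sub_one_ediv {p : ℤ} (hp : 0 < p) (k : ℤ) : (-k - 1) / p = -(k / p) - 1 := by
  have := Int.mul_ediv_add_emod k p
  have := Int.emod_nonneg k hp.ne'
  have := Int.emod_lt_of_pos k hp
  rw [Int.ediv_eq_iff_of_pos hp]
  constructor <;> linarith

theorem Int.ediv_eq_sub_ediv_add_ediv {p x n : ℤ} (h : p ∣ n ∨ p ∣ x - n) :
    x / p = (x - n) / p + n / p := by
  conv_lhs => rw [← sub_add_cancel x n]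
  rcases h with hn | hx
  · exact Int.add_ediv_of_dvd_right hn
  · exact Int.add_ediv_of_dvd_left hx

theorem Int.ModEq.cancel_left_of_isCoprime {a b c m : ℤ} (hc : IsCoprime c m)
    (h : c * a ≡ c * b [ZMOD m]) : a ≡ b [ZMOD m] := by
  rw [Int.modEq_iff_dvd, ← mul_sub] at *
  exact hc.symm.dvd_of_dvd_mul_left h

theorem Ring.factorial_mul_choose_eq_prod_range (x : ℤ) (n : ℕ) :
    n.factorial * Ring.choose x n = ∏ i ∈ range n, (x - i) := by
  rw [← descPochhammer_eval_eq_prod_range, Polynomial.eval_eq_smeval,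
    Ring.descPochhammer_eq_factorial_smul_choose, nsmul_eq_mul]

theorem Ring.prod_range_sub_ediv_factorial (x : ℤ) (n : ℕ) :
    (∏ i ∈ range n, (x - i)) / n.factorial = Ring.choose x n := by
  rw [← Ring.factorial_mul_choose_eq_prod_range, Int.mul_ediv_cancel_left _ (by positivity)]

namespace Function.Periodic

variable {M : Type*} [CommMonoid M] {f : ℤ → M} {N : ℕ}

theorem prod_range_add_one_sub (hf : Periodic f N) (x : ℤ) :
    ∏ i ∈ range N, f (x + 1 - i) = ∏ i ∈ range N, f (x - i) := by
  cases N with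
  | zero => simp
  | succ N =>
    rw [prod_range_succ', prod_range_succ, ← hf (x - N)]
    congr 1
    · push_cast
      simp only [add_sub_add_right_eq_sub]
    · push_cast
      ring_nf

theorem prod_range_sub_eq (hf : Periodic f N) (x y : ℤ) :
    ∏ i ∈ range N, f (x - i) = ∏ i ∈ range N, f (y - i) := by
  suffices h : ∀ x, ∏ i ∈ range N, f (x - i) = ∏ i ∈ range N, f (0 - i) by rw [h x, h y]
  intro x
  induction x using Int.induction_on with
  | zero => rfl
  | succ x ih => rw [hf.prod_range_add_one_sub, ih]
  | pred x ih => rw [← ih, ← hf.prod_range_add_one_sub, sub_add_cancel]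

theorem prod_range_mul_sub_eq (hf : Periodic f N) (m : ℕ) (x y : ℤ) :
    ∏ i ∈ range (N * m), f (x - i) = ∏ i ∈ range (N * m), f (y - i) := by
  induction m generalizing x y with
  | zero => simp
  | succ m ih =>
    simp only [mul_add_one, prod_range_add, Nat.cast_add, ← sub_sub]
    rw [ih x y, hf.prod_range_sub_eq (x - (N * m : ℕ)) (y - (N * m : ℕ))]

end Function.Periodic

def coprimeFactor (p y : ℤ) : ℤ := if p ∣ y then 1 else y

theorem coprimeFactor_modEq {d m a b : ℤ} (hdm : d ∣ m) (h : a ≡ b [ZMOD m]) :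
    coprimeFactor d a ≡ coprimeFactor d b [ZMOD m] := by
  have hiff : d ∣ a ↔ d ∣ b := (h.of_dvd hdm).dvd_iff
  unfold coprimeFactor
  split_ifs <;> first | rfl | exact h | tauto

theorem isCoprime_coprimeFactor {p : ℤ} (hp : Prime p) (y : ℤ) :
    IsCoprime (coprimeFactor p y) p := by
  unfold coprimeFactor
  split_ifs with h
  · exact isCoprime_one_left
  · exact ((Prime.coprime_iff_not_dvd hp).2 h).symm

theorem prod_coprimeFactor_modEq {d : ℤ} {M : ℕ} (hd : d ∣ M) (x : ℤ) (n : ℕ)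
    (h : M ∣ n ∨ (M : ℤ) ∣ x - n) :
    ∏ i ∈ range n, coprimeFactor d (x - i) ≡ ∏ i ∈ range n, coprimeFactor d (n - i) [ZMOD M] := by
  rcases h with ⟨m, rfl⟩ | hx
  · have hf : Function.Periodic (fun y ↦ (coprimeFactor d y : ZMod M)) M := fun y ↦
      (ZMod.intCast_eq_intCast_iff _ _ M).2 (coprimeFactor_modEq hd Int.add_modEq_right)
    rw [← ZMod.intCast_eq_intCast_iff]
    push_cast
    exact hf.prod_range_mul_sub_eq m x _
  · exact Int.ModEq.prod fun i _ ↦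
      coprimeFactor_modEq hd ((Int.modEq_iff_dvd.2 hx).symm.sub_right i)

/-- `E` is the number of multiples of `p` among `x - n + 1, …, x`. -/
theorem prod_range_sub_eq_pow_mul_prod_coprimeFactor {p : ℤ} (hp : 0 < p) (x : ℤ) (n E : ℕ)
    (hE : x / p - (x - n) / p = E) :
    ∏ i ∈ range n, (x - i) =
      p ^ E * (∏ j ∈ range E, (x / p - j)) * ∏ i ∈ range n, coprimeFactor p (x - i) := by
  induction n generalizing E with
  | zero =>
    obtain rfl : E = 0 := by simpa using hE.symm
    simp
  | succ n ih =>
    have hstep : x - (n + 1 : ℕ) = (x - n) - 1 := by push_cast; ring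
    rw [hstep] at hE
    have hmono : (x - n) / p ≤ x / p := Int.ediv_le_ediv hp (by omega)
    by_cases hdvd : p ∣ x - n
    · rw [Int.sub_one_ediv_of_dvd hp hdvd] at hE
      obtain ⟨E, rfl⟩ : ∃ E', E = E' + 1 := ⟨E - 1, by omega⟩
      have hquot : p * (x / p - E) = x - n := by
        rw [← Int.mul_ediv_cancel' hdvd]; push_cast at hE; congr 1; linarith
      simp only [prod_range_succ]
      rw [ih E (by push_cast at hE; linarith), coprimeFactor, if_pos hdvd, ← hquot]
      ring
    · rw [Int.sub_one_ediv_of_not_dvd hp hdvd] at hE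
      simp only [prod_range_succ]
      rw [ih E hE, coprimeFactor, if_neg hdvd]
      ring

theorem Ring.choose_modEq_choose_ediv {p : ℕ} (hp : p.Prime) {r : ℕ} (hr : 0 < r) (x : ℤ)
    (n : ℕ) (h : p ^ r ∣ n ∨ ((p ^ r : ℕ) : ℤ) ∣ x - n) :
    Ring.choose x n ≡ Ring.choose (x / p) (n / p) [ZMOD p ^ r] := by
  have hp0 : (0 : ℤ) < p := by exact_mod_cast hp.pos
  have hpM : (p : ℤ) ∣ ((p ^ r : ℕ) : ℤ) := by exact_mod_cast dvd_pow_self p hr.ne'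
  set E := n / p
  have hE : x / p - (x - n) / p = E := by
    rw [Int.ediv_eq_sub_ediv_add_ediv (h.imp (hpM.trans <| by exact_mod_cast ·) hpM.trans),
      Int.natCast_div]
    ring
  have hx := prod_range_sub_eq_pow_mul_prod_coprimeFactor hp0 x n E hE
  have hn := prod_range_sub_eq_pow_mul_prod_coprimeFactor hp0 n n E (by simp [E])
  simp only [← Ring.factorial_mul_choose_eq_prod_range] at hx hn
  rw [← Int.natCast_div, Ring.choose_natCast, Ring.choose_natCast, Nat.choose_self,
    Nat.choose_self] at hn
  set U := ∏ i ∈ range n, coprimeFactor p (x - i)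
  set V := ∏ i ∈ range n, coprimeFactor p (n - i)
  have hid : V * Ring.choose x n = Ring.choose (x / p) E * U := by
    refine mul_left_cancel₀ (by positivity : (p : ℤ) ^ E * E.factorial ≠ 0) ?_
    linear_combination hx - Ring.choose x n * hn
  have hUV : U ≡ V [ZMOD p ^ r] := by
    simpa using prod_coprimeFactor_modEq hpM x n (by exact_mod_cast h)
  have hV : IsCoprime V (p ^ r) := IsCoprime.prod_left fun i _ ↦
    (isCoprime_coprimeFactor (Nat.prime_iff_prime_int.1 hp) _).pow_right
  refine Int.ModEq.cancel_left_of_isCoprime hV ?_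
  rw [hid, mul_comm]
  exact hUV.mul_right _

theorem binom_eq_choose (x k : ℤ) :
    binom x k = if 0 ≤ k then Ring.choose x k.toNat
      else if 0 ≤ x - k then Ring.choose x (x - k).toNat else 0 := by
  simp only [binom, Ring.prod_range_sub_ediv_factorial]

theorem binom_modEq_binom_ediv {p : ℕ} (hp : p.Prime) {r : ℕ} (hr : 0 < r) (x k : ℤ)
    (hk : (p : ℤ) ^ r ∣ k) : binom x k ≡ binom (x / p) (k / p) [ZMOD p ^ r] := by
  have hp0 : (0 : ℤ) < p := by exact_mod_cast hp.pos
  have hpk : (p : ℤ) ∣ k := (dvd_pow_self _ hr.ne').trans hk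
  rw [binom_eq_choose, binom_eq_choose, ← Int.sub_ediv_of_dvd x hpk]
  by_cases hk0 : 0 ≤ k
  · lift k to ℕ using hk0
    rw [if_pos (Int.natCast_nonneg _), if_pos (Int.ediv_nonneg (Int.natCast_nonneg _) hp0.le),
      ← Int.natCast_div, Int.toNat_natCast, Int.toNat_natCast]
    exact Ring.choose_modEq_choose_ediv hp hr x k (Or.inl (by exact_mod_cast hk))
  rw [if_neg hk0, if_neg (not_le.2 (Int.ediv_neg_of_neg_of_pos (not_le.1 hk0) hp0))]
  by_cases hxk : 0 ≤ x - k
  · rw [if_pos hxk, if_pos (Int.ediv_nonneg hxk hp0.le)]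
    obtain ⟨n, hn⟩ := Int.eq_ofNat_of_zero_le hxk
    rw [hn, ← Int.natCast_div, Int.toNat_natCast, Int.toNat_natCast]
    refine Ring.choose_modEq_choose_ediv hp hr x n (Or.inr ?_)
    rwa [← hn, sub_sub_cancel, Nat.cast_pow]
  · rw [if_neg hxk, if_neg (not_le.2 (Int.ediv_neg_of_neg_of_pos (not_le.1 hxk) hp0))]

/-- For primes `p`, integers `m₁, m₂, k`, and `r ≥ 1`:
`binom(pʳm₁ + pʳm₂ - k - 1, pʳm₁) ≡ binom(p^{r-1}m₁ + p^{r-1}m₂ - ⌊k/p⌋ - 1, p^{r-1}m₁) (mod pʳ)`. -/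
theorem stmt18 (p : ℕ) (hp : p.Prime) (m1 m2 k : ℤ) (r : ℕ) (hr : 1 ≤ r) :
    binom ((p : ℤ) ^ r * m1 + (p : ℤ) ^ r * m2 - k - 1) ((p : ℤ) ^ r * m1) ≡
      binom ((p : ℤ) ^ (r - 1) * m1 + (p : ℤ) ^ (r - 1) * m2 - k.fdiv p - 1)
        ((p : ℤ) ^ (r - 1) * m1) [ZMOD (p : ℤ) ^ r] := by
  have hp0 : (0 : ℤ) < p := by exact_mod_cast hp.pos
  have hpow : (p : ℤ) ^ r = p * p ^ (r - 1) := by rw [← pow_succ', Nat.sub_add_cancel hr]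
  have hx : ((p : ℤ) ^ r * m1 + (p : ℤ) ^ r * m2 - k - 1) / p =
      (p : ℤ) ^ (r - 1) * m1 + (p : ℤ) ^ (r - 1) * m2 - k.fdiv p - 1 := by
    rw [show (p : ℤ) ^ r * m1 + (p : ℤ) ^ r * m2 - k - 1 = (-k - 1) + p * (p ^ (r - 1) * (m1 + m2))
      by rw [hpow]; ring, Int.add_mul_ediv_left _ _ hp0.ne', Int.neg_sub_one_ediv hp0,
      Int.fdiv_eq_ediv_of_nonneg k hp0.le]
    ring
  have hk : (p : ℤ) ^ r * m1 / p = (p : ℤ) ^ (r - 1) * m1 := by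
    rw [hpow, mul_assoc, Int.mul_ediv_cancel_left _ hp0.ne']
  rw [← hx, ← hk]
  exact binom_modEq_binom_ediv hp hr _ _ (dvd_mul_right _ _)
end

section
/- Let p be a prime and let ℤ_p denote the ring of p-adic integers. Let a : ℤ → ℤ_p be such that for every integer s ≥ 0 and every integer l, the sum Σ_{k = l·p^s}^{(l+1)·p^s - 1} a(k) is divisible by p^s in ℤ_p (equivalently, Σ_{⌊k/p^s⌋ = l} a(k) ≡ 0 (mod p^s)). Let C : ℕ → ℤ → ℤ_p be such that for every integer r ≥ 1 and every integer k, C(r, k) ≡ C(r-1, ⌊k/p⌋) (mod p^r) in ℤ_p. Then for every integer r ≥ 0 and every integer l, Σ_{k = l·p^r}^{(l+1)·p^r - 1} a(k)·C(r, k) ≡ 0 (mod p^r) in ℤ_p. -/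
/-!
Cut the block of length `pʳ⁺¹` at `l` into `pʳ` consecutive blocks of length `p`. Replacing
`C(r+1, k)` by `C(r, ⌊k/p⌋)` costs a multiple of `pʳ⁺¹`, and afterwards `C` is constant on each
small block, so the sum becomes `∑_m b(m) C(r, m)` over the block of length `pʳ` at `l`, where
`b(m)` is the block sum of `a` over `[mp, (m+1)p)`. By hypothesis `b = p a'` with `a'` again
satisfying the block-sum hypothesis, so induction on `r` gives the extra factor `pʳ`.
-/

open Finset

noncomputable def blockSum {M : Type*} [AddCommMonoid M] (n : ℤ) (f : ℤ → M) (l : ℤ) : M :=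
  ∑ k ∈ Icc (l * n) ((l + 1) * n - 1), f k

theorem Int.fdiv_eq_iff_mem_Icc {n k l : ℤ} (hn : 0 < n) :
    k.fdiv n = l ↔ k ∈ Icc (l * n) ((l + 1) * n - 1) := by
  rw [Int.fdiv_eq_ediv_of_nonneg _ hn.le, Int.ediv_eq_iff_of_pos hn, mem_Icc]
  constructor <;> rintro ⟨h₁, h₂⟩ <;> constructor <;> linarith

section AddCommMonoid

variable {M : Type*} [AddCommMonoid M] {n : ℤ}

theorem blockSum_mul {m : ℤ} (hn : 0 < n) (hm : 0 < m) (f : ℤ → M) (l : ℤ) :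
    blockSum (n * m) f l = blockSum m (blockSum n f) l := by
  have hmem : ∀ k, k ∈ Icc (l * (n * m)) ((l + 1) * (n * m) - 1) ↔
      k.fdiv n ∈ Icc (l * m) ((l + 1) * m - 1) := fun k => by
    rw [← Int.fdiv_eq_iff_mem_Icc (mul_pos hn hm), ← Int.fdiv_eq_iff_mem_Icc hm,
      Int.fdiv_fdiv_eq_fdiv_mul _ hn.le hm.le]
  unfold blockSum
  rw [← sum_fiberwise_of_maps_to fun k hk => (hmem k).1 hk]
  refine sum_congr rfl fun j hj => sum_congr ?_ fun _ _ => rfl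
  ext k
  rw [mem_filter, hmem, ← Int.fdiv_eq_iff_mem_Icc hn]
  exact ⟨And.right, fun hk => ⟨hk ▸ hj, hk⟩⟩

theorem blockSum_pow_succ (hn : 0 < n) (f : ℤ → M) (s : ℕ) (l : ℤ) :
    blockSum (n ^ (s + 1)) f l = blockSum (n ^ s) (blockSum n f) l := by
  rw [pow_succ', blockSum_mul hn (pow_pos hn s)]

end AddCommMonoid

section CommRing

variable {R : Type*} [CommRing R] {n : ℤ}

theorem blockSum_mul_comp_fdiv (hn : 0 < n) (f g : ℤ → R) (l : ℤ) :
    blockSum n (fun k => f k * g (k.fdiv n)) l = blockSum n f l * g l := by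
  rw [blockSum, blockSum, sum_mul]
  exact sum_congr rfl fun k hk => by rw [(Int.fdiv_eq_iff_mem_Icc hn).2 hk]

theorem exists_mul_eq_blockSum_of_dvd {π : R} (hπ : IsLeftRegular π) (hn : 0 < n) {a : ℤ → R}
    (ha : ∀ (s : ℕ) l, π ^ s ∣ blockSum (n ^ s) a l) :
    ∃ a' : ℤ → R,
      (∀ m, blockSum n a m = π * a' m) ∧ ∀ (s : ℕ) l, π ^ s ∣ blockSum (n ^ s) a' l := by
  choose a' ha' using fun m => by simpa using ha 1 m
  refine ⟨a', ha', fun s l => ?_⟩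
  have h := ha (s + 1) l
  rwa [blockSum_pow_succ hn, funext ha', blockSum, ← mul_sum, pow_succ',
    hπ.dvd_cancel_left] at h

theorem dvd_blockSum_mul {π : R} (hπ : IsLeftRegular π) (hn : 0 < n) (C : ℕ → ℤ → R)
    (hC : ∀ (r : ℕ) k, π ^ (r + 1) ∣ C (r + 1) k - C r (k.fdiv n)) (r : ℕ) :
    ∀ a : ℤ → R, (∀ (s : ℕ) l, π ^ s ∣ blockSum (n ^ s) a l) →
      ∀ l, π ^ r ∣ blockSum (n ^ r) (fun k => a k * C r k) l := by
  induction r with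
  | zero => simp
  | succ r ih =>
    intro a ha l
    obtain ⟨a', ha', ha'_dvd⟩ := exists_mul_eq_blockSum_of_dvd hπ hn ha
    have hsplit : blockSum (n ^ (r + 1)) (fun k => a k * C (r + 1) k) l =
        blockSum (n ^ (r + 1)) (fun k => a k * C r (k.fdiv n)) l +
          blockSum (n ^ (r + 1)) (fun k => a k * (C (r + 1) k - C r (k.fdiv n))) l := by
      simp only [blockSum, ← sum_add_distrib, mul_sub, add_sub_cancel]
    have hmain : blockSum (n ^ (r + 1)) (fun k => a k * C r (k.fdiv n)) l =
        π * blockSum (n ^ r) (fun m => a' m * C r m) l := by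
      have hblock : blockSum n (fun k => a k * C r (k.fdiv n)) = fun m => π * (a' m * C r m) :=
        funext fun m => by rw [blockSum_mul_comp_fdiv hn, ha', mul_assoc]
      rw [blockSum_pow_succ hn, hblock, blockSum, blockSum, mul_sum]
    rw [hsplit, hmain]
    refine dvd_add ?_ (dvd_sum fun k _ => (hC r k).mul_left _)
    rw [pow_succ']
    exact mul_dvd_mul_left π (ih a' ha'_dvd l)

end CommRing

/-- A p-adic summation lemma: if the block sums `∑_{⌊k/pˢ⌋ = l} a(k)` are divisible by `pˢ`
and `C(r, k) ≡ C(r-1, ⌊k/p⌋) (mod pʳ)` for `r ≥ 1`, then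
`∑_{⌊k/pʳ⌋ = l} a(k) C(r, k) ≡ 0 (mod pʳ)` in the p-adic integers. -/
theorem stmt19 (p : ℕ) [hp : Fact p.Prime] (a : ℤ → ℤ_[p])
    (ha : ∀ s : ℕ, ∀ l : ℤ,
      (p : ℤ_[p]) ^ s ∣ ∑ k ∈ Finset.Icc (l * (p : ℤ) ^ s) ((l + 1) * (p : ℤ) ^ s - 1), a k)
    (C : ℕ → ℤ → ℤ_[p])
    (hC : ∀ r : ℕ, 1 ≤ r → ∀ k : ℤ, (p : ℤ_[p]) ^ r ∣ C r k - C (r - 1) (k.fdiv p)) :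
    ∀ r : ℕ, ∀ l : ℤ,
      (p : ℤ_[p]) ^ r ∣
        ∑ k ∈ Finset.Icc (l * (p : ℤ) ^ r) ((l + 1) * (p : ℤ) ^ r - 1), a k * C r k := by
  have hp_regular : IsLeftRegular (p : ℤ_[p]) :=
    (IsRegular.of_ne_zero (Nat.cast_ne_zero.mpr hp.out.ne_zero)).left
  have hp_pos : (0 : ℤ) < p := mod_cast hp.out.pos
  intro r
  exact dvd_blockSum_mul hp_regular hp_pos C (fun r k => hC (r + 1) (by omega) k) r a ha
end
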